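/- arXiv:2303.09579 — 8 statements merged into one kernel-verified Lean document; each statement's English description precedes it below -/
import Mathlib

section
/- For a non-autonomous discrete dynamical system (X, f_{1,∞}) on a compact metric space, cofinite sensitivity implies strong multi-sensitivity. -/
open Metric Set MeasureTheory

/-- `nacomp f n = f_n ∘ ⋯ ∘ f_1` (and `nacomp f 0 = id`): the time-`n` map of the
non-autonomous system `f_{1,∞}`. -/
def nacomp {X : Type*} (f : ℕ → X → X) : ℕ → X → X
  | 0 => id
  | n + 1 => f (n + 1) ∘ nacomp f n

/-- `compFrom f i k = f_{i+k-1} ∘ ⋯ ∘ f_i`, i.e. `f_i^k`. -/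
def compFrom {X : Type*} (f : ℕ → X → X) (i : ℕ) : ℕ → X → X
  | 0 => id
  | k + 1 => f (i + k) ∘ compFrom f i k

/-- Multi-sensitivity of `f_{1,∞}` with respect to the vector `(v 0, …, v (r-1))`. -/
def multiSensWrt {X : Type*} [MetricSpace X] (f : ℕ → X → X) (r : ℕ) (v : ℕ → ℕ) : Prop :=
  ∃ δ > 0, ∀ U : ℕ → Set X, (∀ i < r, IsOpen (U i) ∧ (U i).Nonempty) →
    ∃ n ≥ 1, ∀ i < r, ∃ x ∈ U i, ∃ y ∈ U i,
      δ < dist (nacomp f (n * v i) x) (nacomp f (n * v i) y)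

/-- Strong multi-sensitivity: multi-sensitivity w.r.t. every vector in `ℕ^r`, every `r`. -/
def strongMultiSens {X : Type*} [MetricSpace X] (f : ℕ → X → X) : Prop :=
  ∀ r ≥ 1, ∀ v : ℕ → ℕ, (∀ i < r, 1 ≤ v i) → multiSensWrt f r v

/-- `𝒩`-sensitivity: multi-sensitivity w.r.t. `(1, 2, …, r)` for every `r`. -/
def nSens {X : Type*} [MetricSpace X] (f : ℕ → X → X) : Prop :=
  ∀ r ≥ 1, multiSensWrt f r (fun i => i + 1)

/-- Sensitivity of the non-autonomous system. -/
def sens {X : Type*} [MetricSpace X] (f : ℕ → X → X) : Prop :=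
  ∃ δ > 0, ∀ U : Set X, IsOpen U → U.Nonempty →
    ∃ n ≥ 1, ∃ x ∈ U, ∃ y ∈ U, δ < dist (nacomp f n x) (nacomp f n y)

/-- Multi-sensitivity of the non-autonomous system. -/
def multiSens {X : Type*} [MetricSpace X] (f : ℕ → X → X) : Prop :=
  ∃ δ > 0, ∀ r : ℕ, ∀ U : ℕ → Set X, (∀ i < r, IsOpen (U i) ∧ (U i).Nonempty) →
    ∃ n ≥ 1, ∀ i < r, ∃ x ∈ U i, ∃ y ∈ U i, δ < dist (nacomp f n x) (nacomp f n y)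

/-- Cofinite sensitivity: for some `δ > 0`, for every nonempty open `U` the set
`N_{f_{1,∞}}(U, δ)` is cofinite in `{1, 2, …}`. -/
def cofSens {X : Type*} [MetricSpace X] (f : ℕ → X → X) : Prop :=
  ∃ δ > 0, ∀ U : Set X, IsOpen U → U.Nonempty →
    {n : ℕ | 1 ≤ n ∧ ¬ ∃ x ∈ U, ∃ y ∈ U, δ < dist (nacomp f n x) (nacomp f n y)}.Finite

/-- Autonomous analogue of `multiSensWrt` for a single map `g`. -/
def multiSensWrtAuto {X : Type*} [MetricSpace X] (g : X → X) (r : ℕ) (v : ℕ → ℕ) : Prop :=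
  ∃ δ > 0, ∀ U : ℕ → Set X, (∀ i < r, IsOpen (U i) ∧ (U i).Nonempty) →
    ∃ n ≥ 1, ∀ i < r, ∃ x ∈ U i, ∃ y ∈ U i,
      δ < dist (g^[n * v i] x) (g^[n * v i] y)

def strongMultiSensAuto {X : Type*} [MetricSpace X] (g : X → X) : Prop :=
  ∀ r ≥ 1, ∀ v : ℕ → ℕ, (∀ i < r, 1 ≤ v i) → multiSensWrtAuto g r v

def nSensAuto {X : Type*} [MetricSpace X] (g : X → X) : Prop :=
  ∀ r ≥ 1, multiSensWrtAuto g r (fun i => i + 1)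

/-- `k`-periodicity of the non-autonomous system: `f_{j+kl} = f_j` for `l ≥ 1`, `1 ≤ j ≤ k`. -/
def kPeriodic {X : Type*} (f : ℕ → X → X) (k : ℕ) : Prop :=
  1 ≤ k ∧ ∀ l ≥ 1, ∀ j, 1 ≤ j → j ≤ k → f (j + k * l) = f j

/-- Multi-transitivity of the non-autonomous system. -/
def multiTrans {X : Type*} [TopologicalSpace X] (f : ℕ → X → X) : Prop :=
  ∀ m ≥ 1, ∀ U V : ℕ → Set X,
    (∀ i < m, IsOpen (U i) ∧ (U i).Nonempty ∧ IsOpen (V i) ∧ (V i).Nonempty) →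
    ∃ k ≥ 1, ∀ i < m, (nacomp f ((i + 1) * k) '' U i ∩ V i).Nonempty

/-- Multi-sensitivity w.r.t. a vector, for an explicit distance function `ρ`
(used for products equipped with the metric `√(d₁² + d₂²)`). -/
def multiSensWrtD {Z : Type*} [TopologicalSpace Z] (ρ : Z → Z → ℝ) (f : ℕ → Z → Z)
    (r : ℕ) (v : ℕ → ℕ) : Prop :=
  ∃ δ > 0, ∀ U : ℕ → Set Z, (∀ i < r, IsOpen (U i) ∧ (U i).Nonempty) →
    ∃ n ≥ 1, ∀ i < r, ∃ x ∈ U i, ∃ y ∈ U i,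
      δ < ρ (nacomp f (n * v i) x) (nacomp f (n * v i) y)

def strongMultiSensD {Z : Type*} [TopologicalSpace Z] (ρ : Z → Z → ℝ) (f : ℕ → Z → Z) : Prop :=
  ∀ r ≥ 1, ∀ v : ℕ → ℕ, (∀ i < r, 1 ≤ v i) → multiSensWrtD ρ f r v

def nSensD {Z : Type*} [TopologicalSpace Z] (ρ : Z → Z → ℝ) (f : ℕ → Z → Z) : Prop :=
  ∀ r ≥ 1, multiSensWrtD ρ f r (fun i => i + 1)

/-- The metric `√(d₁² + d₂²)` on a product of metric spaces. -/
noncomputable def prodDist {X Y : Type*} [MetricSpace X] [MetricSpace Y]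
    (p q : X × Y) : ℝ :=
  Real.sqrt (dist p.1 q.1 ^ 2 + dist p.2 q.2 ^ 2)

/-- `N_{f_{1,∞}^{[v]}}(U, δ)` for an explicit distance function `ρ`. -/
def NsetD {Z : Type*} (ρ : Z → Z → ℝ) (f : ℕ → Z → Z) (v : ℕ) (U : Set Z) (δ : ℝ) : Set ℕ :=
  {n : ℕ | 1 ≤ n ∧ ∃ x ∈ U, ∃ y ∈ U, δ < ρ (nacomp f (n * v) x) (nacomp f (n * v) y)}

/-- `N_{f_{1,∞}^{[v]} × g_{1,∞}^{[v']}}(U × U', δ)` for the product metric `√(d₁² + d₂²)`. -/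
noncomputable def NsetProd {X Y : Type*} [MetricSpace X] [MetricSpace Y]
    (f : ℕ → X → X) (g : ℕ → Y → Y) (v v' : ℕ) (U : Set X) (U' : Set Y) (δ : ℝ) : Set ℕ :=
  {n : ℕ | 1 ≤ n ∧ ∃ p ∈ U ×ˢ U', ∃ q ∈ U ×ˢ U',
    δ < prodDist (nacomp f (n * v) p.1, nacomp g (n * v') p.2)
                 (nacomp f (n * v) q.1, nacomp g (n * v') q.2)}


/-! Cofinite sensitivity with constant `δ` means that for every nonempty open `U` all large times
lie in `N(U, δ)`. Since `v i ≥ 1`, the time `n * v i` is large once `n` is, and finitely many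
such "eventually" conditions hold simultaneously, so one `n` serves all of `U 0, …, U (r-1)`
with the same `δ`. -/

open Filter

lemma Nat.finite_setOf_pos_and_not_iff_eventually {p : ℕ → Prop} :
    {n : ℕ | 1 ≤ n ∧ ¬ p n}.Finite ↔ ∀ᶠ n in atTop, p n := by
  have hpos : {n : ℕ | 1 ≤ n ∧ ¬ p n}.Finite ↔ ∀ᶠ n in atTop, 1 ≤ n → p n := by
    simp only [← Nat.cofinite_eq_atTop, eventually_cofinite, Classical.not_imp]
  rw [hpos]
  exact ⟨fun h => (h.and (eventually_ge_atTop 1)).mono fun _ hn => hn.1 hn.2,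
    fun h => h.mono fun _ hn _ => hn⟩

lemma cofSens_iff_eventually {X : Type*} [MetricSpace X] {f : ℕ → X → X} :
    cofSens f ↔ ∃ δ > 0, ∀ U : Set X, IsOpen U → U.Nonempty →
      ∀ᶠ n in atTop, ∃ x ∈ U, ∃ y ∈ U, δ < dist (nacomp f n x) (nacomp f n y) := by
  simp only [cofSens, Nat.finite_setOf_pos_and_not_iff_eventually]

lemma multiSensWrt_of_eventually {X : Type*} [MetricSpace X] {f : ℕ → X → X} {δ : ℝ}
    (hδ : 0 < δ) (hsens : ∀ U : Set X, IsOpen U → U.Nonempty →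
      ∀ᶠ n in atTop, ∃ x ∈ U, ∃ y ∈ U, δ < dist (nacomp f n x) (nacomp f n y))
    {r : ℕ} {v : ℕ → ℕ} (hv : ∀ i < r, 1 ≤ v i) : multiSensWrt f r v := by
  refine ⟨δ, hδ, fun U hU => ?_⟩
  have hscaled : ∀ i < r, Tendsto (fun n => n * v i) atTop atTop := fun i hi =>
    tendsto_atTop_mono (fun n => Nat.le_mul_of_pos_right n (hv i hi)) tendsto_id
  have hall : ∀ᶠ n in atTop, ∀ i ∈ Finset.range r, ∃ x ∈ U i, ∃ y ∈ U i,
      δ < dist (nacomp f (n * v i) x) (nacomp f (n * v i) y) := by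
    refine (eventually_all_finset _).2 fun i hi => ?_
    rw [Finset.mem_range] at hi
    exact (hscaled i hi).eventually (hsens (U i) (hU i hi).1 (hU i hi).2)
  obtain ⟨n, hn, hn1⟩ := (hall.and (eventually_ge_atTop 1)).exists
  exact ⟨n, hn1, fun i hi => hn i (Finset.mem_range.2 hi)⟩

theorem stmt_0_general {X : Type*} [MetricSpace X] (f : ℕ → X → X)
    (h : cofSens f) : strongMultiSens f := by
  obtain ⟨δ, hδ, hsens⟩ := cofSens_iff_eventually.1 h
  exact fun _ _ _ hv => multiSensWrt_of_eventually hδ hsens hv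

/-- cofinite sensitivity implies strong multi-sensitivity. -/
theorem stmt_0 {X : Type*} [MetricSpace X] [CompactSpace X] (f : ℕ → X → X)
    (hf : ∀ n, Continuous (f n)) (h : cofSens f) : strongMultiSens f :=
  stmt_0_general f h
end

section
/- Let (X, f_{1,∞}) be a k-periodic non-autonomous system on a compact metric space and let g = f_k ∘ ⋯ ∘ f_1. Then (X, f_{1,∞}) is strongly multi-sensitive if and only if the autonomous system (X, g) is strongly multi-sensitive. -/
open Metric Set MeasureTheory

/-! Periodicity gives `f_1^{km} = g^m`, so multi-sensitivity of `g` for a vector `v` is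
multi-sensitivity of `f_{1,∞}` for `k v`, and the latter yields multi-sensitivity of `f_{1,∞}`
for `v` by passing from the time `n` to the time `k n`. -/

theorem nacomp_add_of_shift {X : Type*} {f : ℕ → X → X} {n j : ℕ}
    (h : ∀ i, 1 ≤ i → i ≤ j → f (n + i) = f i) :
    nacomp f (n + j) = nacomp f j ∘ nacomp f n := by
  induction j with
  | zero => rfl
  | succ j ih =>
    rw [← add_assoc, nacomp, nacomp, add_assoc, h (j + 1) (by omega) le_rfl,
      ih fun i hi hij => h i hi (by omega)]
    rfl

theorem kPeriodic.nacomp_mul {X : Type*} {f : ℕ → X → X} {k : ℕ} (hper : kPeriodic f k) (m : ℕ) :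
    nacomp f (k * m) = (nacomp f k)^[m] := by
  induction m with
  | zero => rfl
  | succ m ih =>
    have hshift : ∀ i, 1 ≤ i → i ≤ k → f (k * m + i) = f i := by
      intro i hi hik
      rcases Nat.eq_zero_or_pos m with rfl | hm
      · rw [mul_zero, zero_add]
      · rw [add_comm]
        exact hper.2 m hm i hi hik
    rw [mul_add_one, nacomp_add_of_shift hshift, ih, Function.iterate_succ']

theorem multiSensWrt.of_mul_left {X : Type*} [MetricSpace X] {f : ℕ → X → X} {r c : ℕ}
    {v : ℕ → ℕ} (hc : 1 ≤ c) (h : multiSensWrt f r fun i => c * v i) : multiSensWrt f r v := by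
  obtain ⟨δ, hδ, hU⟩ := h
  refine ⟨δ, hδ, fun U hUo => ?_⟩
  obtain ⟨n, hn, hpts⟩ := hU U hUo
  refine ⟨c * n, Nat.one_le_iff_ne_zero.mpr (by positivity), fun i hi => ?_⟩
  simpa only [mul_assoc, mul_left_comm c n] using hpts i hi

theorem multiSensWrt_mul_iff_multiSensWrtAuto {X : Type*} [MetricSpace X] {f : ℕ → X → X}
    {g : X → X} {k r : ℕ} {v : ℕ → ℕ} (hg : ∀ m, nacomp f (k * m) = g^[m]) :
    multiSensWrt f r (fun i => k * v i) ↔ multiSensWrtAuto g r v := by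
  have hcomm : ∀ n i, nacomp f (n * (k * v i)) = g^[n * v i] := fun n i => by
    rw [mul_left_comm, hg]
  simp only [multiSensWrt, multiSensWrtAuto, hcomm]

theorem stmt_3_general {X : Type*} [MetricSpace X] (f : ℕ → X → X) (k : ℕ)
    (hper : kPeriodic f k) :
    strongMultiSens f ↔ strongMultiSensAuto (nacomp f k) := by
  have hk := hper.1
  have hiff := fun r v => multiSensWrt_mul_iff_multiSensWrtAuto (r := r) (v := v) hper.nacomp_mul
  constructor
  · intro h r hr v hv
    exact (hiff r v).1 (h r hr _ fun i hi => Nat.mul_le_mul hk (hv i hi))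
  · intro h r hr v hv
    exact ((hiff r v).2 (h r hr v hv)).of_mul_left hk

/-- for a `k`-periodic system, strong multi-sensitivity of `f_{1,∞}`
is equivalent to that of `g = f_k ∘ ⋯ ∘ f_1`. -/
theorem stmt_3 {X : Type*} [MetricSpace X] [CompactSpace X] (f : ℕ → X → X) (k : ℕ)
    (hf : ∀ n, Continuous (f n)) (hper : kPeriodic f k) :
    strongMultiSens f ↔ strongMultiSensAuto (nacomp f k) :=
  stmt_3_general f k hper
end

section
/- Let (X, f_{1,∞}) be a k-periodic non-autonomous system on a compact metric space and let g = f_k ∘ ⋯ ∘ f_1. Then (X, f_{1,∞}) is N-sensitive if and only if the autonomous system (X, g) is N-sensitive. -/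
open Metric Set MeasureTheory

lemma nacomp_period_aux {X : Type*} (f : ℕ → X → X) (k : ℕ) (hper : kPeriodic f k) :
    ∀ l, ∀ t ≤ k, nacomp f (k * l + t) = (nacomp f t) ∘ (nacomp f k)^[l] := by
  obtain ⟨hk, hp⟩ := hper
  intro l
  induction l with
  | zero => intro t ht; simp
  | succ l IH =>
    have base : nacomp f (k * (l + 1)) = (nacomp f k)^[l + 1] := by
      have h1 : k * (l + 1) = k * l + k := by ring
      rw [h1, IH k le_rfl, Function.iterate_succ']
    intro t ht
    induction t with
    | zero => simpa [nacomp.eq_1] using base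
    | succ t IHt =>
      have ht' : t ≤ k := Nat.le_of_succ_le ht
      have e1 : k * (l + 1) + (t + 1) = (k * (l + 1) + t) + 1 := by ring
      rw [e1]
      show f (k * (l + 1) + t + 1) ∘ nacomp f (k * (l + 1) + t) = _
      rw [IHt ht']
      have hfe : f (k * (l + 1) + t + 1) = f (t + 1) := by
        have e2 : k * (l + 1) + t + 1 = (t + 1) + k * (l + 1) := by ring
        rw [e2]
        exact hp (l + 1) (Nat.le_add_left 1 l) (t + 1) (Nat.succ_le_succ (Nat.zero_le t)) ht
      rw [hfe]
      rfl

lemma nacomp_mul_k {X : Type*} (f : ℕ → X → X) (k : ℕ) (hper : kPeriodic f k) (m : ℕ) :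
    nacomp f (m * k) = (nacomp f k)^[m] := by
  have := nacomp_period_aux f k hper m 0 (Nat.zero_le k)
  simpa [mul_comm, nacomp.eq_1] using this

/-- for a `k`-periodic system, 𝒩-sensitivity of `f_{1,∞}`
is equivalent to that of `g = f_k ∘ ⋯ ∘ f_1`. -/
theorem stmt_4 {X : Type*} [MetricSpace X] [CompactSpace X] (f : ℕ → X → X) (k : ℕ)
    (hf : ∀ n, Continuous (f n)) (hper : kPeriodic f k) :
    nSens f ↔ nSensAuto (nacomp f k) := by
  have hk : 1 ≤ k := hper.1
  constructor
  · intro h r hr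
    obtain ⟨δ, hδ, H⟩ := h (r * k) (Nat.one_le_iff_ne_zero.mpr (Nat.mul_ne_zero (by omega) (by omega)))
    refine ⟨δ, hδ, ?_⟩
    intro U hU
    have hXne : Nonempty X := ⟨(hU 0 hr).2.some⟩
    set V : ℕ → Set X := fun j => if k ∣ (j + 1) then U ((j + 1) / k - 1) else Set.univ with hV
    have hVprop : ∀ j < r * k, IsOpen (V j) ∧ (V j).Nonempty := by
      intro j hj
      by_cases hdvd : k ∣ (j + 1)
      · have hidx : (j + 1) / k - 1 < r := by
          obtain ⟨c, hc⟩ := hdvd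
          have hc1 : 1 ≤ c := by
            rcases Nat.eq_zero_or_pos c with h0 | h1
            · subst h0; simp at hc
            · exact h1
          have hcr : c ≤ r := by
            have hle : k * c ≤ k * r := by rw [mul_comm k r]; omega
            exact Nat.le_of_mul_le_mul_left hle (by omega)
          have : (j + 1) / k = c := by
            rw [hc]; exact Nat.mul_div_cancel_left c (by omega)
          omega
        simp only [hV, if_pos hdvd]
        exact hU _ hidx
      · simp only [hV, if_neg hdvd]
        exact ⟨isOpen_univ, Set.univ_nonempty⟩
    obtain ⟨n, hn1, hn⟩ := H V hVprop
    refine ⟨n, hn1, ?_⟩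
    intro i hi
    have hj : (i + 1) * k - 1 < r * k := by
      have h1 : (i + 1) * k ≤ r * k := Nat.mul_le_mul_right k (by omega)
      have h2 : 1 ≤ (i + 1) * k := Nat.one_le_iff_ne_zero.mpr (Nat.mul_ne_zero (by omega) (by omega))
      omega
    obtain ⟨x, hx, y, hy, hxy⟩ := hn ((i + 1) * k - 1) hj
    have hjk : (i + 1) * k - 1 + 1 = (i + 1) * k := by
      have : 1 ≤ (i + 1) * k := Nat.one_le_iff_ne_zero.mpr (Nat.mul_ne_zero (by omega) (by omega))
      omega
    have hdvd : k ∣ ((i + 1) * k - 1 + 1) := by rw [hjk]; exact dvd_mul_left k (i + 1)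
    have hVi : V ((i + 1) * k - 1) = U i := by
      have hq : (i + 1) * k / k = i + 1 := by
        rw [mul_comm]; exact Nat.mul_div_cancel_left _ (by omega)
      simp only [hV, if_pos hdvd, hjk, hq, Nat.add_sub_cancel]
    rw [hVi] at hx hy
    refine ⟨x, hx, y, hy, ?_⟩
    have he : n * ((i + 1) * k - 1 + 1) = (n * (i + 1)) * k := by rw [hjk]; ring
    rw [he, nacomp_mul_k f k hper] at hxy
    exact hxy
  · intro h r hr
    obtain ⟨δ, hδ, H⟩ := h r hr
    refine ⟨δ, hδ, ?_⟩
    intro U hU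
    obtain ⟨n, hn1, hn⟩ := H U hU
    refine ⟨n * k, Nat.one_le_iff_ne_zero.mpr (Nat.mul_ne_zero (by omega) (by omega)), ?_⟩
    intro i hi
    obtain ⟨x, hx, y, hy, hxy⟩ := hn i hi
    refine ⟨x, hx, y, hy, ?_⟩
    have he : (n * k) * (i + 1) = (n * (i + 1)) * k := by ring
    rw [he, nacomp_mul_k f k hper]
    exact hxy
end

section
/- For a periodic non-autonomous system ([0,1], f_{1,∞}) on the closed unit interval, the following are equivalent: (1) strong multi-sensitivity, (2) N-sensitivity, (3) multi-sensitivity, (4) sensitivity. -/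
open Metric Set MeasureTheory

namespace S5

variable {X : Type*}

theorem nacomp_add (f : ℕ → X → X) (a : ℕ) :
    ∀ b, nacomp f (a + b) = compFrom f (a + 1) b ∘ nacomp f a
  | 0 => rfl
  | b + 1 => by
    show f (a + b + 1) ∘ nacomp f (a + b) = (f (a + 1 + b) ∘ compFrom f (a + 1) b) ∘ nacomp f a
    rw [nacomp_add f a b, show a + b + 1 = a + 1 + b by omega]
    rfl

theorem compFrom_one (f : ℕ → X → X) : ∀ n, compFrom f 1 n = nacomp f n
  | 0 => rfl
  | n + 1 => by
    show f (1 + n) ∘ compFrom f 1 n = f (n + 1) ∘ nacomp f n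
    rw [compFrom_one f n, Nat.add_comm 1 n]

theorem continuous_nacomp [TopologicalSpace X] {f : ℕ → X → X} (hf : ∀ n, Continuous (f n)) :
    ∀ n, Continuous (nacomp f n)
  | 0 => continuous_id
  | n + 1 => (hf (n + 1)).comp (continuous_nacomp hf n)

theorem f_per {f : ℕ → X → X} {k : ℕ} (hper : kPeriodic f k) :
    ∀ m, 1 ≤ m → f (m + k) = f m := by
  obtain ⟨hk, hp⟩ := hper
  intro m hm
  obtain ⟨r, q, hrq, hrk⟩ : ∃ r q, r + k * q = m - 1 ∧ r < k :=
    ⟨(m - 1) % k, (m - 1) / k, Nat.mod_add_div _ _, Nat.mod_lt _ (by omega)⟩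
  have hkq : k * (q + 1) = k * q + k := by ring
  have hm' : m = (r + 1) + k * q := by omega
  have h1 : f ((r + 1) + k * (q + 1)) = f (r + 1) :=
    hp (q + 1) (by omega) (r + 1) (by omega) (by omega)
  have h2 : f m = f (r + 1) := by
    rcases Nat.eq_zero_or_pos q with h0 | h0
    · rw [hm', h0]; simp
    · rw [hm']; exact hp q h0 (r + 1) (by omega) (by omega)
  rw [show m + k = (r + 1) + k * (q + 1) by omega, h1, h2]

theorem compFrom_per {f : ℕ → X → X} {k : ℕ} (hper : kPeriodic f k) (a : ℕ) :
    ∀ b, compFrom f (a + 1 + k) b = compFrom f (a + 1) b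
  | 0 => rfl
  | b + 1 => by
    show f (a + 1 + k + b) ∘ compFrom f (a + 1 + k) b = f (a + 1 + b) ∘ compFrom f (a + 1) b
    rw [compFrom_per hper a b, show a + 1 + k + b = a + 1 + b + k by omega,
      f_per hper (a + 1 + b) (by omega)]

theorem nacomp_add_k {f : ℕ → X → X} {k : ℕ} (hper : kPeriodic f k) (n : ℕ) :
    nacomp f (n + k) = nacomp f n ∘ nacomp f k := by
  rw [Nat.add_comm n k, nacomp_add f k n]
  rw [show k + 1 = 0 + 1 + k by omega, compFrom_per hper 0, compFrom_one]

theorem nacomp_mul_add {f : ℕ → X → X} {k : ℕ} (hper : kPeriodic f k) :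
    ∀ (q n : ℕ), nacomp f (n + k * q) = nacomp f n ∘ (nacomp f k)^[q]
  | 0, n => by simp
  | q + 1, n => by
    rw [show n + k * (q + 1) = n + k * q + k by ring, nacomp_add_k hper,
      nacomp_mul_add hper q n, Function.iterate_succ]
    rfl





/-- `spr T S c`: two points of `S` whose images under `T` are more than `c` apart. -/
def spr {X : Type*} [MetricSpace X] (T : X → X) (S : Set X) (c : ℝ) : Prop :=
  ∃ x ∈ S, ∃ y ∈ S, c < dist (T x) (T y)

theorem spr_mono {X : Type*} [MetricSpace X] {T : X → X} {S : Set X} {c c' : ℝ}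
    (h : c' ≤ c) (hs : spr T S c) : spr T S c' := by
  obtain ⟨x, hx, y, hy, hd⟩ := hs
  exact ⟨x, hx, y, hy, lt_of_le_of_lt h hd⟩

theorem spr_subset {X : Type*} [MetricSpace X] {T : X → X} {S S' : Set X} {c : ℝ}
    (h : S ⊆ S') (hs : spr T S c) : spr T S' c := by
  obtain ⟨x, hx, y, hy, hd⟩ := hs
  exact ⟨x, h hx, y, h hy, hd⟩

theorem spr_of_image_subset {X : Type*} [MetricSpace X] {T T' : X → X} {S S' : Set X} {c : ℝ}
    (h : T' '' S' ⊆ T '' S) (hs : spr T' S' c) : spr T S c := by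
  obtain ⟨x, hx, y, hy, hd⟩ := hs
  obtain ⟨x', hx', hx'e⟩ := h ⟨x, hx, rfl⟩
  obtain ⟨y', hy', hy'e⟩ := h ⟨y, hy, rfl⟩
  exact ⟨x', hx', y', hy', by rwa [hx'e, hy'e]⟩

theorem finset_pos {α : Type*} (P : α → ℝ → Prop) (A : Finset α) :
    (∀ a ∈ A, ∃ e, 0 < e ∧ P a e) →
    ∃ e, 0 < e ∧ ∀ a ∈ A, ∃ e', e ≤ e' ∧ P a e' := by
  classical
  induction A using Finset.induction_on with
  | empty => exact fun _ => ⟨1, one_pos, by simp⟩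
  | @insert a A ha IH =>
    intro h
    obtain ⟨e₁, he₁, hP⟩ := h a (Finset.mem_insert_self a A)
    obtain ⟨e₂, he₂, hA⟩ := IH (fun b hb => h b (Finset.mem_insert_of_mem hb))
    refine ⟨min e₁ e₂, lt_min he₁ he₂, ?_⟩
    intro b hb
    rcases Finset.mem_insert.mp hb with rfl | hb
    · exact ⟨e₁, min_le_left _ _, hP⟩
    · obtain ⟨e', he', hP'⟩ := hA b hb
      exact ⟨e', le_trans (min_le_right _ _) he', hP'⟩

theorem finset_bound {α : Type*} (P : α → ℕ → Prop) (A : Finset α) :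
    (∀ a ∈ A, ∃ n, P a n) → ∃ N, ∀ a ∈ A, ∃ n ≤ N, P a n := by
  classical
  induction A using Finset.induction_on with
  | empty => exact fun _ => ⟨0, by simp⟩
  | @insert a A ha IH =>
    intro h
    obtain ⟨n₁, hP⟩ := h a (Finset.mem_insert_self a A)
    obtain ⟨N, hA⟩ := IH (fun b hb => h b (Finset.mem_insert_of_mem hb))
    refine ⟨max n₁ N, ?_⟩
    intro b hb
    rcases Finset.mem_insert.mp hb with rfl | hb
    · exact ⟨n₁, le_max_left _ _, hP⟩
    · obtain ⟨n, hn, hP'⟩ := hA b hb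
      exact ⟨n, le_trans hn (le_max_right _ _), hP'⟩

/-! ### The interval `[0,1]` -/

abbrev XI := ↥(Set.Icc (0:ℝ) 1)

noncomputable def proj01 : ℝ → XI := fun t => Set.projIcc (0:ℝ) 1 zero_le_one t

theorem proj01_of_mem {t : ℝ} (ht : t ∈ Set.Icc (0:ℝ) 1) : proj01 t = ⟨t, ht⟩ :=
  Set.projIcc_of_mem _ ht

/-- Grid interval `[l·h, (l+1)·h]` inside `[0,1]`. -/
def Jset (h : ℝ) (l : ℕ) : Set XI := {x | (l : ℝ) * h ≤ (x : ℝ) ∧ (x : ℝ) ≤ ((l : ℝ) + 1) * h}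

/-- Open core of `Jset`. -/
def Oset (h : ℝ) (l : ℕ) : Set XI := Subtype.val ⁻¹' Set.Ioo ((l : ℝ) * h) (((l : ℝ) + 1) * h)

noncomputable def Lfin (h : ℝ) : Finset ℕ := (Finset.range (⌈1 / h⌉₊ + 1)).filter (fun l => ((l : ℝ) + 1) * h ≤ 1)

theorem mem_Lfin {h : ℝ} (hh : 0 < h) {l : ℕ} :
    l ∈ Lfin h ↔ ((l : ℝ) + 1) * h ≤ 1 := by
  constructor
  · exact fun hl => (Finset.mem_filter.mp hl).2
  · intro hl
    refine Finset.mem_filter.mpr ⟨Finset.mem_range.mpr ?_, hl⟩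
    have h1 : (l : ℝ) + 1 ≤ 1 / h := (le_div_iff₀ hh).mpr hl
    have h2 : (l : ℝ) < 1 / h := by linarith
    have := Nat.lt_ceil.mpr h2
    omega

theorem Oset_subset (h : ℝ) (l : ℕ) : Oset h l ⊆ Jset h l :=
  fun x hx => ⟨le_of_lt hx.1, le_of_lt hx.2⟩

theorem Oset_open (h : ℝ) (l : ℕ) : IsOpen (Oset h l) :=
  isOpen_Ioo.preimage continuous_subtype_val

theorem Oset_nonempty {h : ℝ} (hh : 0 < h) {l : ℕ} (hl : ((l : ℝ) + 1) * h ≤ 1) :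
    (Oset h l).Nonempty := by
  have h0 : (0:ℝ) ≤ (l : ℝ) * h := by positivity
  have hlt : (l : ℝ) * h + h / 2 < ((l : ℝ) + 1) * h := by nlinarith
  refine ⟨⟨(l : ℝ) * h + h / 2, ⟨by linarith, by linarith⟩⟩, ⟨by simpa using by linarith, hlt⟩⟩

theorem Jset_eq_image {h : ℝ} (hh : 0 < h) {l : ℕ} (hl : ((l : ℝ) + 1) * h ≤ 1) :
    Jset h l = proj01 '' Set.Icc ((l : ℝ) * h) (((l : ℝ) + 1) * h) := by
  have h0 : (0:ℝ) ≤ (l : ℝ) * h := by positivity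
  ext x
  constructor
  · intro hx
    refine ⟨(x : ℝ), ⟨hx.1, hx.2⟩, ?_⟩
    rw [proj01_of_mem x.2]
  · rintro ⟨t, ht, rfl⟩
    have htm : t ∈ Set.Icc (0:ℝ) 1 := ⟨le_trans h0 ht.1, le_trans ht.2 hl⟩
    rw [proj01_of_mem htm]
    exact ⟨ht.1, ht.2⟩

theorem Jset_preconnected {h : ℝ} (hh : 0 < h) {l : ℕ} (hl : ((l : ℝ) + 1) * h ≤ 1) :
    IsPreconnected (Jset h l) := by
  rw [Jset_eq_image hh hl]
  exact isPreconnected_Icc.image proj01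
    ((continuous_projIcc : Continuous (Set.projIcc (0:ℝ) 1 zero_le_one)).continuousOn)

theorem contain {T : XI → XI} (hT : Continuous T) {K : Set XI} (hK : IsPreconnected K)
    {h : ℝ} (hh : 0 < h) (hsp : spr T K (2 * h)) :
    ∃ l ∈ Lfin h, Jset h l ⊆ T '' K := by
  obtain ⟨x, hx, y, hy, hd⟩ := hsp
  set A : Set ℝ := Subtype.val '' (T '' K) with hAdef
  have hA : IsPreconnected A :=
    (hK.image T hT.continuousOn).image _ continuous_subtype_val.continuousOn
  have hOC : A.OrdConnected := hA.ordConnected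
  set a := min ((T x) : ℝ) ((T y) : ℝ) with hadef
  set b := max ((T x) : ℝ) ((T y) : ℝ) with hbdef
  have hdist : dist (T x) (T y) = |((T x) : ℝ) - ((T y) : ℝ)| := by
    rw [Subtype.dist_eq, Real.dist_eq]
  have hab : 2 * h < b - a := by
    rcases le_total ((T x) : ℝ) ((T y) : ℝ) with hle | hle
    · rw [hadef, hbdef, min_eq_left hle, max_eq_right hle]
      rw [hdist, abs_sub_comm, abs_of_nonneg (by linarith)] at hd; linarith
    · rw [hadef, hbdef, min_eq_right hle, max_eq_left hle]
      rw [hdist, abs_of_nonneg (by linarith)] at hd; linarith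
  have hxA : ((T x) : ℝ) ∈ A := ⟨T x, ⟨x, hx, rfl⟩, rfl⟩
  have hyA : ((T y) : ℝ) ∈ A := ⟨T y, ⟨y, hy, rfl⟩, rfl⟩
  have haA : a ∈ A := by
    rcases le_total ((T x) : ℝ) ((T y) : ℝ) with hle | hle
    · rwa [hadef, min_eq_left hle]
    · rwa [hadef, min_eq_right hle]
  have hbA : b ∈ A := by
    rcases le_total ((T x) : ℝ) ((T y) : ℝ) with hle | hle
    · rwa [hbdef, max_eq_right hle]
    · rwa [hbdef, max_eq_left hle]
  have ha0 : 0 ≤ a := le_min (T x).2.1 (T y).2.1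
  have hb1 : b ≤ 1 := max_le (T x).2.2 (T y).2.2
  set l := ⌈a / h⌉₊ with hldef
  have h1 : a ≤ (l : ℝ) * h := (div_le_iff₀ hh).mp (Nat.le_ceil _)
  have h2 : ((l : ℝ) + 1) * h ≤ b := by
    have hc : (l : ℝ) < a / h + 1 := Nat.ceil_lt_add_one (by positivity)
    have hc' : (l : ℝ) * h < (a / h + 1) * h := by nlinarith
    have : a / h * h = a := div_mul_cancel₀ a (ne_of_gt hh)
    nlinarith
  refine ⟨l, (mem_Lfin hh).mpr (le_trans h2 hb1), ?_⟩
  intro z hz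
  have hzA : (z : ℝ) ∈ A := hOC.out haA hbA ⟨le_trans h1 hz.1, le_trans hz.2 h2⟩
  obtain ⟨w, hw, hwz⟩ := hzA
  exact (Subtype.ext hwz : w = z) ▸ hw

theorem dist_le_one (x y : XI) : dist x y ≤ 1 := by
  rw [Subtype.dist_eq, Real.dist_eq, abs_le]
  obtain ⟨hx1, hx2⟩ := x.2
  obtain ⟨hy1, hy2⟩ := y.2
  constructor <;> linarith

theorem sens_large {f : ℕ → XI → XI} (hf : ∀ n, Continuous (f n)) {δ : ℝ} (hδ : 0 < δ)
    (hs : ∀ U : Set XI, IsOpen U → U.Nonempty → ∃ n ≥ 1, spr (nacomp f n) U δ) :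
    ∀ U : Set XI, IsOpen U → U.Nonempty → ∀ M, ∃ n ≥ M, spr (nacomp f n) U δ := by
  rintro U hU ⟨x₀, hx₀⟩ M
  set V := U ∩ ⋂ m ∈ Finset.range M, (nacomp f m) ⁻¹' (Metric.ball (nacomp f m x₀) (δ / 2))
    with hVdef
  have hVo : IsOpen V := hU.inter (isOpen_biInter_finset fun m _ =>
    (continuous_nacomp hf m).isOpen_preimage _ Metric.isOpen_ball)
  have hx₀V : x₀ ∈ V :=
    ⟨hx₀, Set.mem_biInter fun m _ => Metric.mem_ball_self (half_pos hδ)⟩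
  obtain ⟨n, hn1, x, hx, y, hy, hd⟩ := hs V hVo ⟨x₀, hx₀V⟩
  refine ⟨n, ?_, x, hx.1, y, hy.1, hd⟩
  by_contra hlt
  push_neg at hlt
  have hxb := Set.mem_iInter₂.mp hx.2 n (Finset.mem_range.mpr hlt)
  have hyb := Set.mem_iInter₂.mp hy.2 n (Finset.mem_range.mpr hlt)
  rw [Set.mem_preimage, Metric.mem_ball] at hxb hyb
  have htri : dist (nacomp f n x) (nacomp f n y) ≤
      dist (nacomp f n x) (nacomp f n x₀) + dist (nacomp f n y) (nacomp f n x₀) :=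
    dist_triangle_right _ _ _
  linarith

theorem noncollapse {f : ℕ → XI → XI} {δ : ℝ} (hδ : 0 < δ)
    (h9 : ∀ U : Set XI, IsOpen U → U.Nonempty → ∀ M, ∃ n ≥ M, spr (nacomp f n) U δ)
    (S O : Set XI) (hOS : O ⊆ S) (hO : IsOpen O) (hOne : O.Nonempty) (s : ℕ) :
    ∃ e, 0 < e ∧ spr (nacomp f s) S e := by
  by_contra hcon
  push_neg at hcon
  have hconst : ∀ x ∈ S, ∀ y ∈ S, nacomp f s x = nacomp f s y := by
    intro x hx y hy
    by_contra hne
    have hdp : 0 < dist (nacomp f s x) (nacomp f s y) := dist_pos.mpr hne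
    exact (hcon _ (half_pos hdp)) ⟨x, hx, y, hy, half_lt_self hdp⟩
  obtain ⟨n, hn, x, hx, y, hy, hd⟩ := h9 O hO hOne s
  obtain ⟨m, rfl⟩ : ∃ m, n = s + m := ⟨n - s, by omega⟩
  have hxy : nacomp f s x = nacomp f s y := hconst x (hOS hx) y (hOS hy)
  have e1 : nacomp f (s + m) x = compFrom f (s + 1) m (nacomp f s x) := by
    rw [nacomp_add]; rfl
  have e2 : nacomp f (s + m) y = compFrom f (s + 1) m (nacomp f s y) := by
    rw [nacomp_add]; rfl
  rw [e1, e2, hxy, dist_self] at hd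
  linarith

theorem unif {f : ℕ → XI → XI} (hf : ∀ n, Continuous (f n)) (k : ℕ) {δ : ℝ} (hδ : 0 < δ) :
    ∃ ε, 0 < ε ∧ ε ≤ δ ∧ ∀ s < k, ∀ x y : XI,
      dist x y ≤ ε → dist (nacomp f s x) (nacomp f s y) ≤ δ := by
  haveI : CompactSpace XI := isCompact_iff_compactSpace.mp isCompact_Icc
  have key : ∀ s ∈ Finset.range k, ∃ e, 0 < e ∧ ∀ x y : XI,
      dist x y ≤ e → dist (nacomp f s x) (nacomp f s y) ≤ δ := by
    intro s _
    have hu : UniformContinuous (nacomp f s) :=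
      CompactSpace.uniformContinuous_of_continuous (continuous_nacomp hf s)
    obtain ⟨d, hd, hcl⟩ := Metric.uniformContinuous_iff.mp hu δ hδ
    exact ⟨d / 2, half_pos hd, fun x y hxy =>
      le_of_lt (hcl (lt_of_le_of_lt hxy (half_lt_self hd)))⟩
  obtain ⟨e, he, hE⟩ := finset_pos _ _ key
  refine ⟨min e δ, lt_min he hδ, min_le_right _ _, ?_⟩
  intro s hs x y hxy
  obtain ⟨e', hee', hP⟩ := hE s (Finset.mem_range.mpr hs)
  exact hP x y (le_trans hxy (le_trans (min_le_left _ _) hee'))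

theorem chain (G : XI → XI) (L : Finset ℕ) (J : ℕ → Set XI) (N : ℕ)
    (hstep : ∀ l ∈ L, ∃ q, q ≤ N ∧ 1 ≤ q ∧ ∃ l' ∈ L, J l' ⊆ G^[q] '' (J l)) :
    ∀ s, ∀ l ∈ L, ∃ u ≤ N, ∃ l' ∈ L, G^[u] '' (J l') ⊆ G^[s] '' (J l) := by
  intro s
  induction s using Nat.strong_induction_on with
  | _ s IH =>
    intro l hl
    by_cases hsN : s ≤ N
    · exact ⟨s, hsN, l, hl, subset_rfl⟩
    · obtain ⟨q, hqN, hq1, l'', hl'', hsub⟩ := hstep l hl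
      obtain ⟨u, huN, l', hl', hsub'⟩ := IH (s - q) (by omega) l'' hl''
      refine ⟨u, huN, l', hl', ?_⟩
      have hcomp : G^[s] '' (J l) = G^[s - q] '' (G^[q] '' (J l)) := by
        rw [← Set.image_comp, ← Function.iterate_add, Nat.sub_add_cancel (by omega)]
      rw [hcomp]
      exact hsub'.trans (Set.image_mono hsub)


theorem main_cof {f : ℕ → XI → XI} (hf : ∀ n, Continuous (f n)) {k : ℕ} (hper : kPeriodic f k)
    {δ : ℝ} (hδ : 0 < δ)
    (hs0 : ∀ U : Set XI, IsOpen U → U.Nonempty → ∃ n ≥ 1, spr (nacomp f n) U δ) :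
    ∃ c, 0 < c ∧ ∀ U : Set XI, IsOpen U → U.Nonempty →
      ∃ M, ∀ n ≥ M, spr (nacomp f n) U c := by
  have hk : 1 ≤ k := hper.1
  have h9 := sens_large hf hδ hs0
  set G := nacomp f k with hGdef
  have hGcont : Continuous G := continuous_nacomp hf k
  have hGit : ∀ q, Continuous (G^[q]) := fun q => hGcont.iterate q
  have hdec : ∀ n : ℕ, nacomp f n = nacomp f (n % k) ∘ G^[n / k] := by
    intro n
    have h := nacomp_mul_add hper (n / k) (n % k)
    rwa [Nat.mod_add_div n k] at h
  obtain ⟨ε, hε, hεδ, hεu⟩ := unif hf k hδ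
  have hA : ∀ U : Set XI, IsOpen U → U.Nonempty → ∀ M, ∃ q ≥ M, spr (G^[q]) U ε := by
    intro U hU hUne M
    obtain ⟨n, hnM, x, hx, y, hy, hd⟩ := h9 U hU hUne (k * M)
    have hqM : M ≤ n / k :=
      (Nat.le_div_iff_mul_le (show 0 < k by omega)).mpr (by rw [Nat.mul_comm]; omega)
    refine ⟨n / k, hqM, x, hx, y, hy, ?_⟩
    by_contra hle
    push_neg at hle
    have hu := hεu (n % k) (Nat.mod_lt n (by omega)) _ _ hle
    rw [hdec n] at hd
    simp only [Function.comp_apply] at hd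
    linarith
  set h1 : ℝ := ε / 2 with h1def
  have h1pos : 0 < h1 := by positivity
  have h2ε : 2 * h1 = ε := by rw [h1def]; ring
  have hB : ∀ l ∈ Lfin h1, ∃ q, 1 ≤ q ∧ ∃ l' ∈ Lfin h1,
      Jset h1 l' ⊆ G^[q] '' (Jset h1 l) := by
    intro l hl
    have hl' := (mem_Lfin h1pos).mp hl
    obtain ⟨q, hq1, hsp⟩ := hA (Oset h1 l) (Oset_open h1 l) (Oset_nonempty h1pos hl') 1
    have hsp' : spr (G^[q]) (Jset h1 l) (2 * h1) := by
      rw [h2ε]; exact spr_subset (Oset_subset h1 l) hsp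
    obtain ⟨l', hl'mem, hsub⟩ := contain (hGit q) (Jset_preconnected h1pos hl') h1pos hsp'
    exact ⟨q, hq1, l', hl'mem, hsub⟩
  obtain ⟨N, hN⟩ := finset_bound
    (fun l q => 1 ≤ q ∧ ∃ l' ∈ Lfin h1, Jset h1 l' ⊆ G^[q] '' (Jset h1 l)) (Lfin h1) hB
  have hstep : ∀ l ∈ Lfin h1, ∃ q, q ≤ N ∧ 1 ≤ q ∧ ∃ l' ∈ Lfin h1,
      Jset h1 l' ⊆ G^[q] '' (Jset h1 l) := by
    intro l hl
    obtain ⟨q, hqN, hP⟩ := hN l hl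
    exact ⟨q, hqN, hP.1, hP.2⟩
  have hGu : ∀ u : ℕ, G^[u] = nacomp f (k * u) := by
    intro u
    have h := nacomp_mul_add hper u 0
    rw [Nat.zero_add] at h
    rw [h]
    rfl
  have hC : ∀ p ∈ Lfin h1 ×ˢ Finset.range (N + 1), ∃ e, 0 < e ∧
      spr (G^[p.2]) (Jset h1 p.1) e := by
    rintro ⟨l, u⟩ hp
    rw [Finset.mem_product] at hp
    have hl' := (mem_Lfin h1pos).mp hp.1
    rw [hGu u]
    exact noncollapse hδ h9 (Jset h1 l) (Oset h1 l) (Oset_subset h1 l) (Oset_open h1 l)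
      (Oset_nonempty h1pos hl') (k * u)
  obtain ⟨c₂, hc₂, hC'⟩ := finset_pos _ _ hC
  have hC2 : ∀ l ∈ Lfin h1, ∀ u ≤ N, spr (G^[u]) (Jset h1 l) c₂ := by
    intro l hl u hu
    obtain ⟨e', he', hsp⟩ := hC' (l, u)
      (Finset.mem_product.mpr ⟨hl, Finset.mem_range.mpr (by omega)⟩)
    exact spr_mono he' hsp
  have hall : ∀ s, ∀ l ∈ Lfin h1, spr (G^[s]) (Jset h1 l) c₂ := by
    intro s l hl
    obtain ⟨u, huN, l', hl', hsub⟩ := chain G (Lfin h1) (Jset h1) N hstep s l hl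
    exact spr_of_image_subset hsub (hC2 l' hl' u huN)
  set h2 : ℝ := c₂ / 2 with h2def
  have h2pos : 0 < h2 := by positivity
  have h2c : 2 * h2 = c₂ := by rw [h2def]; ring
  have hD : ∀ p ∈ Finset.range k ×ˢ Lfin h2, ∃ e, 0 < e ∧
      spr (nacomp f p.1) (Jset h2 p.2) e := by
    rintro ⟨s, l⟩ hp
    rw [Finset.mem_product] at hp
    have hl' := (mem_Lfin h2pos).mp hp.2
    exact noncollapse hδ h9 (Jset h2 l) (Oset h2 l) (Oset_subset h2 l) (Oset_open h2 l)
      (Oset_nonempty h2pos hl') s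
  obtain ⟨c₄, hc₄, hD'⟩ := finset_pos _ _ hD
  have hD2 : ∀ s < k, ∀ l ∈ Lfin h2, spr (nacomp f s) (Jset h2 l) c₄ := by
    intro s hsk l hl
    obtain ⟨e', he', hsp⟩ := hD' (s, l)
      (Finset.mem_product.mpr ⟨Finset.mem_range.mpr hsk, hl⟩)
    exact spr_mono he' hsp
  refine ⟨c₄, hc₄, ?_⟩
  intro U hU hUne
  obtain ⟨x₀, hx₀⟩ := hUne
  obtain ⟨r, hr, hball⟩ := Metric.isOpen_iff.mp hU x₀ hx₀
  set V : Set XI := Subtype.val ⁻¹' Set.Ioo ((x₀ : ℝ) - r) ((x₀ : ℝ) + r) with hVdef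
  have hVU : V ⊆ U := by
    intro x hx
    apply hball
    rw [Metric.mem_ball, Subtype.dist_eq, Real.dist_eq, abs_lt]
    obtain ⟨ha', hb'⟩ := hx
    constructor <;> linarith
  have hVopen : IsOpen V := isOpen_Ioo.preimage continuous_subtype_val
  have hVne : V.Nonempty :=
    ⟨x₀, show (x₀ : ℝ) ∈ Set.Ioo ((x₀ : ℝ) - r) ((x₀ : ℝ) + r) from
      ⟨by linarith, by linarith⟩⟩
  have hVconn : IsPreconnected V := by
    have himg : V = proj01 '' (Set.Ioo ((x₀:ℝ) - r) ((x₀:ℝ) + r) ∩ Set.Icc 0 1) := by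
      ext z
      constructor
      · intro hz
        refine ⟨(z : ℝ), ⟨hz, z.2⟩, ?_⟩
        rw [proj01_of_mem z.2]
      · rintro ⟨t, ⟨ht1, ht2⟩, rfl⟩
        rw [proj01_of_mem ht2]
        exact ht1
    rw [himg]
    exact ((Set.ordConnected_Ioo.inter Set.ordConnected_Icc).isPreconnected).image proj01
      ((continuous_projIcc : Continuous (Set.projIcc (0:ℝ) 1 zero_le_one)).continuousOn)
  obtain ⟨q₁, hq₁, hspV⟩ := hA V hVopen hVne 1
  have hspV' : spr (G^[q₁]) V (2 * h1) := by rw [h2ε]; exact hspV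
  obtain ⟨l₁, hl₁, hsub₁⟩ := contain (hGit q₁) hVconn h1pos hspV'
  refine ⟨k * (q₁ + 1), ?_⟩
  intro n hn
  have hq : q₁ + 1 ≤ n / k :=
    (Nat.le_div_iff_mul_le (show 0 < k by omega)).mpr (by rw [Nat.mul_comm]; omega)
  have hsp₂ : spr (G^[n / k - q₁]) (Jset h1 l₁) (2 * h2) := by
    rw [h2c]; exact hall (n / k - q₁) l₁ hl₁
  obtain ⟨l₂, hl₂, hsub₂⟩ := contain (hGit _)
    (Jset_preconnected h1pos ((mem_Lfin h1pos).mp hl₁)) h2pos hsp₂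
  have hsp₃ : spr (nacomp f (n % k)) (Jset h2 l₂) c₄ :=
    hD2 (n % k) (Nat.mod_lt n (by omega)) l₂ hl₂
  apply spr_of_image_subset ?_ hsp₃
  calc nacomp f (n % k) '' (Jset h2 l₂)
      ⊆ nacomp f (n % k) '' (G^[n / k - q₁] '' (Jset h1 l₁)) := Set.image_mono hsub₂
    _ ⊆ nacomp f (n % k) '' (G^[n / k - q₁] '' (G^[q₁] '' V)) :=
        Set.image_mono (Set.image_mono hsub₁)
    _ = nacomp f n '' V := by
        have e1 : G^[n / k - q₁] '' (G^[q₁] '' V) = G^[n / k] '' V := by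
          rw [← Set.image_comp, ← Function.iterate_add, Nat.sub_add_cancel (by omega)]
        rw [e1, ← Set.image_comp, ← hdec n]
    _ ⊆ nacomp f n '' U := Set.image_mono hVU

end S5

/-- for a periodic non-autonomous system on `[0,1]`, strong
multi-sensitivity, 𝒩-sensitivity, multi-sensitivity and sensitivity are equivalent. -/
theorem stmt_5 (f : ℕ → ↥(Set.Icc (0:ℝ) 1) → ↥(Set.Icc (0:ℝ) 1))
    (hf : ∀ n, Continuous (f n)) (k : ℕ) (hper : kPeriodic f k) :
    (strongMultiSens f ↔ sens f) ∧ (nSens f ↔ sens f) ∧ (multiSens f ↔ sens f) := by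
  have hmain : sens f → ∃ c, 0 < c ∧ ∀ U : Set S5.XI, IsOpen U → U.Nonempty →
      ∃ M, ∀ n ≥ M, S5.spr (nacomp f n) U c := by
    rintro ⟨δ, hδ, hs⟩
    exact S5.main_cof hf hper hδ hs
  have key : sens f → ∀ (r : ℕ) (v : ℕ → ℕ), (∀ i < r, 1 ≤ v i) → multiSensWrt f r v := by
    intro hs r v hv
    obtain ⟨c, hc, H⟩ := hmain hs
    refine ⟨c, hc, ?_⟩
    intro U hU
    have hex : ∀ i ∈ Finset.range r, ∃ M, ∀ n ≥ M, S5.spr (nacomp f n) (U i) c := fun i hi =>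
      H (U i) (hU i (Finset.mem_range.mp hi)).1 (hU i (Finset.mem_range.mp hi)).2
    obtain ⟨N, hN⟩ := S5.finset_bound _ _ hex
    refine ⟨N + 1, Nat.le_add_left 1 N, ?_⟩
    intro i hi
    obtain ⟨M, hM, hP⟩ := hN i (Finset.mem_range.mpr hi)
    have h1 : N + 1 ≤ (N + 1) * v i := Nat.le_mul_of_pos_right _ (hv i hi)
    exact hP ((N + 1) * v i) (by omega)
  refine ⟨⟨?_, ?_⟩, ⟨?_, ?_⟩, ⟨?_, ?_⟩⟩
  · intro hsm
    obtain ⟨δ, hδ, H⟩ := hsm 1 le_rfl (fun _ => 1) (fun _ _ => le_rfl)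
    refine ⟨δ, hδ, ?_⟩
    intro U hU hUne
    obtain ⟨n, hn, H'⟩ := H (fun _ => U) (fun i _ => ⟨hU, hUne⟩)
    obtain ⟨x, hx, y, hy, hd⟩ := H' 0 Nat.one_pos
    exact ⟨n, hn, x, hx, y, hy, by simpa using hd⟩
  · intro hs r _ v hv
    exact key hs r v hv
  · intro hns
    obtain ⟨δ, hδ, H⟩ := hns 1 le_rfl
    refine ⟨δ, hδ, ?_⟩
    intro U hU hUne
    obtain ⟨n, hn, H'⟩ := H (fun _ => U) (fun i _ => ⟨hU, hUne⟩)
    obtain ⟨x, hx, y, hy, hd⟩ := H' 0 Nat.one_pos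
    exact ⟨n, hn, x, hx, y, hy, by simpa using hd⟩
  · intro hs r _
    exact key hs r (fun i => i + 1) (fun i _ => Nat.le_add_left 1 i)
  · rintro ⟨δ, hδ, H⟩
    refine ⟨δ, hδ, ?_⟩
    intro U hU hUne
    obtain ⟨n, hn, H'⟩ := H 1 (fun _ => U) (fun i _ => ⟨hU, hUne⟩)
    obtain ⟨x, hx, y, hy, hd⟩ := H' 0 Nat.one_pos
    exact ⟨n, hn, x, hx, y, hy, hd⟩
  · intro hs
    obtain ⟨c, hc, H⟩ := hmain hs
    refine ⟨c, hc, ?_⟩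
    intro r U hU
    have hex : ∀ i ∈ Finset.range r, ∃ M, ∀ n ≥ M, S5.spr (nacomp f n) (U i) c := fun i hi =>
      H (U i) (hU i (Finset.mem_range.mp hi)).1 (hU i (Finset.mem_range.mp hi)).2
    obtain ⟨N, hN⟩ := S5.finset_bound _ _ hex
    refine ⟨N + 1, Nat.le_add_left 1 N, ?_⟩
    intro i hi
    obtain ⟨M, hM, hP⟩ := hN i (Finset.mem_range.mpr hi)
    exact hP (N + 1) (by omega)
end

section
/- If a periodic non-autonomous system ([0,1], f_{1,∞}) on the closed unit interval is multi-transitive, then it is strongly multi-sensitive. -/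
open Metric Set MeasureTheory

abbrev II := ↥(Set.Icc (0:ℝ) 1)

noncomputable def iiproj (t : ℝ) : II :=
  ⟨min 1 (max 0 t), ⟨le_min zero_le_one (le_max_left 0 t), min_le_left 1 _⟩⟩

lemma iiproj_cont : Continuous iiproj :=
  Continuous.subtype_mk (continuous_const.min (continuous_const.max continuous_id)) _

lemma iiproj_val {t : ℝ} (h : t ∈ Set.Icc (0:ℝ) 1) : (iiproj t : ℝ) = t := by
  simp only [iiproj]
  rw [max_eq_right h.1, min_eq_right h.2]

lemma iiproj_image (S : Set ℝ) (hS : S ⊆ Set.Icc 0 1) :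
    iiproj '' S = (Subtype.val ⁻¹' S : Set II) := by
  ext x
  constructor
  · rintro ⟨t, htS, rfl⟩
    simpa [Set.mem_preimage, iiproj_val (hS htS)] using htS
  · intro hx
    exact ⟨(x : ℝ), hx, Subtype.ext (iiproj_val x.2)⟩

lemma preconn_preimage (S : Set ℝ) (h : (S ∩ Set.Icc 0 1).OrdConnected) :
    IsPreconnected (Subtype.val ⁻¹' S : Set II) := by
  have h1 : IsPreconnected (S ∩ Set.Icc (0:ℝ) 1) := h.isPreconnected
  have h2 : (Subtype.val ⁻¹' S : Set II) = Subtype.val ⁻¹' (S ∩ Set.Icc 0 1) := by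
    ext x; simp [x.2]
  rw [h2, ← iiproj_image _ inter_subset_right]
  exact h1.image _ iiproj_cont.continuousOn

lemma open_preimage {S : Set ℝ} (h : IsOpen S) :
    IsOpen (Subtype.val ⁻¹' S : Set II) := h.preimage continuous_subtype_val

section Auto
variable (g : II → II)

/-- total transitivity hypothesis -/
def TTg : Prop := ∀ n ≥ 1, ∀ U V : Set II, IsOpen U → U.Nonempty → IsOpen V → V.Nonempty →
  ∃ K ≥ 1, ((g^[n*K]) '' U ∩ V).Nonempty

variable {g}

lemma fix_iter {z : II} (hz : g z = z) : ∀ s, g^[s] z = z := by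
  intro s
  induction s with
  | zero => rfl
  | succ n ih => rw [Function.iterate_succ_apply', ih, hz]

lemma fix_iter_mul {p : ℕ} {z : II} (hz : g^[p] z = z) : ∀ s, g^[p*s] z = z := by
  intro s
  induction s with
  | zero => rfl
  | succ n ih => rw [Nat.mul_succ, Function.iterate_add_apply, hz, ih]

/-- Step B : existence of an interior fixed point -/
lemma exists_interior_fixed (hg : Continuous g) (hTT : TTg g) :
    ∃ z : II, g z = z ∧ 0 < (z:ℝ) ∧ (z:ℝ) < 1 := by
  by_contra hno
  push_neg at hno
  have hnofix : ∀ x : II, g x = x → (x:ℝ) = 0 ∨ (x:ℝ) = 1 := by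
    intro x hx
    by_cases h0 : 0 < (x:ℝ)
    · right; exact le_antisymm x.2.2 (hno x hx h0)
    · left; exact le_antisymm (not_lt.mp h0) x.2.1
  set e0 : II := ⟨0, by norm_num⟩ with he0
  set e1 : II := ⟨1, by norm_num⟩ with he1
  set S : Set II := Subtype.val ⁻¹' (Set.Ioo (0:ℝ) 1) with hSdef
  have hSpre : IsPreconnected S := preconn_preimage _ ((Set.ordConnected_Ioo).inter Set.ordConnected_Icc)
  set q : II → ℝ := fun x => ((g x : II) : ℝ) - (x : ℝ) with hq
  have hqc : Continuous q := (continuous_subtype_val.comp hg).sub continuous_subtype_val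
  have hqne : ∀ x ∈ S, q x ≠ 0 := by
    intro x hxS h
    have : g x = x := Subtype.ext (by simpa [q, sub_eq_zero] using h)
    rcases hnofix x this with h' | h'
    · exact absurd h' (ne_of_gt hxS.1)
    · exact absurd h' (ne_of_lt hxS.2)
  -- q has constant sign on S
  have hqim : IsPreconnected (q '' S) := hSpre.image _ hqc.continuousOn
  have hdi : (∀ x ∈ S, 0 < q x) ∨ (∀ x ∈ S, q x < 0) := by
    by_cases hpos : ∀ x ∈ S, 0 < q x
    · exact Or.inl hpos
    · right
      push_neg at hpos
      obtain ⟨x0, hx0S, hx0⟩ := hpos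
      have hx0' : q x0 < 0 := lt_of_le_of_ne hx0 (hqne x0 hx0S)
      intro x hxS
      by_contra hx'
      have hxpos : 0 < q x := lt_of_le_of_ne (not_lt.mp hx') (Ne.symm (hqne x hxS))
      have hOC := hqim.ordConnected
      have h0 : (0:ℝ) ∈ q '' S := hOC.out ⟨x0, hx0S, rfl⟩ ⟨x, hxS, rfl⟩
        ⟨le_of_lt hx0', le_of_lt hxpos⟩
      obtain ⟨w, hwS, hw⟩ := h0
      exact hqne w hwS hw
  -- closure facts
  have he1cl : e1 ∈ closure S := by
    rw [Metric.mem_closure_iff]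
    intro ε hε
    set t : ℝ := max (1/2) (1 - ε/2) with htdef
    have ht0 : 0 < t := lt_max_of_lt_left (by norm_num)
    have ht1 : t < 1 := max_lt (by norm_num) (by linarith)
    refine ⟨⟨t, le_of_lt ht0, le_of_lt ht1⟩, by simp [S, ht0, ht1], ?_⟩
    rw [Subtype.dist_eq]
    simp only [Real.dist_eq]
    have : 1 - t ≤ ε/2 := by
      have := le_max_right (1/2) (1 - ε/2)
      linarith
    rw [abs_of_nonneg (by linarith : (0:ℝ) ≤ 1 - t)]
    linarith
  have he0cl : e0 ∈ closure S := by
    rw [Metric.mem_closure_iff]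
    intro ε hε
    set t : ℝ := min (1/2) (ε/2) with htdef
    have ht0 : 0 < t := lt_min (by norm_num) (by linarith)
    have ht1 : t < 1 := min_lt_of_left_lt (by norm_num)
    refine ⟨⟨t, le_of_lt ht0, le_of_lt ht1⟩, by simp [S, ht0, ht1], ?_⟩
    rw [Subtype.dist_eq]
    simp only [Real.dist_eq]
    have : t ≤ ε/2 := min_le_right _ _
    rw [abs_of_nonpos (by linarith : (0:ℝ) - t ≤ 0)]
    linarith
  rcases hdi with hpos | hneg
  · -- q > 0 on S; then g e1 = e1 and orbits move up
    have hq1 : 0 ≤ q e1 := by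
      have hcl : closure S ⊆ {x : II | 0 ≤ q x} :=
        closure_minimal (fun x hx => le_of_lt (hpos x hx)) (isClosed_le continuous_const hqc)
      exact hcl he1cl
    have hge1 : g e1 = e1 := by
      apply Subtype.ext
      have h2 : ((g e1 : II) : ℝ) ≤ 1 := (g e1).2.2
      have : (1:ℝ) ≤ ((g e1 : II) : ℝ) := by simp only [q, he1] at hq1 ⊢; linarith
      simpa [he1] using le_antisymm h2 this
    have hmono : ∀ x : II, (x:ℝ) ≤ ((g x : II) : ℝ) := by
      intro x
      rcases eq_or_lt_of_le x.2.2 with h1 | h1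
      · have : x = e1 := Subtype.ext (by rw [he1]; exact h1)
        rw [this, hge1]
      · rcases eq_or_lt_of_le x.2.1 with h0 | h0
        · rw [← h0]; exact (g x).2.1
        · have : x ∈ S := by simp [S, h0, h1]
          have := hpos x this
          simp only [q] at this
          linarith
    have horb : ∀ (n : ℕ) (x : II), (x:ℝ) ≤ ((g^[n] x : II) : ℝ) := by
      intro n
      induction n with
      | zero => intro x; simp
      | succ m ih =>
        intro x
        rw [Function.iterate_succ_apply']
        exact le_trans (ih x) (hmono _)
    -- contradiction with transitivity
    obtain ⟨K, hK, ⟨w, ⟨⟨u, huU, hwu⟩, hwV⟩⟩⟩ := hTT 1 le_rfl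
      (Subtype.val ⁻¹' (Set.Ioo (1/2 : ℝ) 1)) (Subtype.val ⁻¹' (Set.Ioo (0:ℝ) (1/2)))
      (open_preimage isOpen_Ioo) ⟨⟨3/4, by norm_num⟩, by norm_num [Set.mem_preimage]⟩
      (open_preimage isOpen_Ioo) ⟨⟨1/4, by norm_num⟩, by norm_num [Set.mem_preimage]⟩
    have h1 : (1/2 : ℝ) < (u:ℝ) := huU.1
    have h2 : ((w : II) : ℝ) < 1/2 := hwV.2
    have h3 : (u:ℝ) ≤ ((w : II) : ℝ) := by rw [← hwu]; exact horb _ u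
    linarith
  · -- q < 0 on S; then g e0 = e0 and orbits move down
    have hq0 : q e0 ≤ 0 := by
      have hcl : closure S ⊆ {x : II | q x ≤ 0} :=
        closure_minimal (fun x hx => le_of_lt (hneg x hx)) (isClosed_le hqc continuous_const)
      exact hcl he0cl
    have hge0 : g e0 = e0 := by
      apply Subtype.ext
      have h2 : (0:ℝ) ≤ ((g e0 : II) : ℝ) := (g e0).2.1
      have : ((g e0 : II) : ℝ) ≤ 0 := by simp only [q, he0] at hq0 ⊢; linarith
      simpa [he0] using le_antisymm this h2
    have hmono : ∀ x : II, ((g x : II) : ℝ) ≤ (x:ℝ) := by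
      intro x
      rcases eq_or_lt_of_le x.2.1 with h0 | h0
      · have : x = e0 := Subtype.ext (by rw [he0]; exact h0.symm)
        rw [this, hge0]
      · rcases eq_or_lt_of_le x.2.2 with h1 | h1
        · rw [h1]; exact (g x).2.2
        · have : x ∈ S := by simp [S, h0, h1]
          have := hneg x this
          simp only [q] at this
          linarith
    have horb : ∀ (n : ℕ) (x : II), ((g^[n] x : II) : ℝ) ≤ (x:ℝ) := by
      intro n
      induction n with
      | zero => intro x; simp
      | succ m ih =>
        intro x
        rw [Function.iterate_succ_apply']
        exact le_trans (hmono _) (ih x)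
    obtain ⟨K, hK, ⟨w, ⟨⟨u, huU, hwu⟩, hwV⟩⟩⟩ := hTT 1 le_rfl
      (Subtype.val ⁻¹' (Set.Ioo (0:ℝ) (1/2))) (Subtype.val ⁻¹' (Set.Ioo (1/2 : ℝ) 1))
      (open_preimage isOpen_Ioo) ⟨⟨1/4, by norm_num⟩, by norm_num [Set.mem_preimage]⟩
      (open_preimage isOpen_Ioo) ⟨⟨3/4, by norm_num⟩, by norm_num [Set.mem_preimage]⟩
    have h1 : (u:ℝ) < 1/2 := huU.2
    have h2 : (1/2 : ℝ) < ((w : II) : ℝ) := hwV.1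
    have h3 : ((w : II) : ℝ) ≤ (u:ℝ) := by rw [← hwu]; exact horb _ u
    linarith

/-- KEY LEMMA: for a totally transitive interval map, the image of any nonempty open set
eventually contains any given interior fixed point of `g^[p]`, along `g^[p*m]`. -/
lemma crux (hg : Continuous g) (hTT : TTg g) (p : ℕ) (hp : 1 ≤ p) (z : II)
    (hzfix : g^[p] z = z) (hz0 : 0 < (z:ℝ)) (hz1 : (z:ℝ) < 1)
    (J : Set II) (hJo : IsOpen J) (hJne : J.Nonempty) :
    ∃ M, ∀ m ≥ M, z ∈ g^[p*m] '' J := by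
  obtain ⟨x0, hx0J⟩ := hJne
  obtain ⟨ε, hε, hball⟩ := Metric.isOpen_iff.mp hJo x0 hx0J
  set B : Set II := Subtype.val ⁻¹' (Set.Ioo ((x0:ℝ) - ε) ((x0:ℝ) + ε)) with hBdef
  have hBo : IsOpen B := open_preimage isOpen_Ioo
  have hx0B : x0 ∈ B := by simp [B, hε]
  have hBJ : B ⊆ J := by
    intro x hx
    apply hball
    rw [Metric.mem_ball, Subtype.dist_eq, Real.dist_eq, abs_sub_lt_iff]
    constructor <;> [linarith [hx.1, hx.2]; linarith [hx.1, hx.2]]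
  have hBpre : IsPreconnected B :=
    preconn_preimage _ ((Set.ordConnected_Ioo).inter Set.ordConnected_Icc)
  -- return time
  obtain ⟨n₁, hn₁, ⟨c, ⟨xb, hxbB, hcim⟩, hcB⟩⟩ := hTT p hp B B hBo ⟨x0, hx0B⟩ hBo ⟨x0, hx0B⟩
  -- the chain of images
  set Φ : ℕ → Set II := fun j => g^[p*n₁*j] '' B with hΦdef
  have hΦ0 : Φ 0 = B := by simp [Φ]
  have hΦpre : ∀ j, IsPreconnected (Φ j) := fun j => hBpre.image _ (hg.iterate _).continuousOn
  have hover : ∀ j, (g^[p*n₁*j] c) ∈ Φ j ∩ Φ (j+1) := by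
    intro j
    constructor
    · exact ⟨c, hcB, rfl⟩
    · refine ⟨xb, hxbB, ?_⟩
      have h : p*n₁*(j+1) = p*n₁*j + p*n₁ := by ring
      rw [h, Function.iterate_add_apply, hcim]
  set S : ℕ → Set II := fun m => ⋃ j ∈ Set.Iic m, Φ j with hSdef
  have hΦS : ∀ j m, j ≤ m → Φ j ⊆ S m := by
    intro j m hjm
    exact Set.subset_biUnion_of_mem (u := Φ) hjm
  have hSsucc : ∀ m, S (m+1) = S m ∪ Φ (m+1) := by
    intro m
    apply Set.Subset.antisymm
    · intro x hx
      obtain ⟨j, hj, hxj⟩ := Set.mem_iUnion₂.mp hx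
      rcases Nat.le_succ_iff.mp hj with h | h
      · exact Or.inl (hΦS j m h hxj)
      · rw [h] at hxj; exact Or.inr hxj
    · intro x hx
      rcases hx with hx | hx
      · obtain ⟨j, hj, hxj⟩ := Set.mem_iUnion₂.mp hx
        exact Set.mem_iUnion₂.mpr ⟨j, le_trans hj (Nat.le_succ m), hxj⟩
      · exact Set.mem_iUnion₂.mpr ⟨m+1, Set.mem_Iic.mpr le_rfl, hx⟩
  have hx0S : ∀ m, x0 ∈ S m := by
    intro m
    exact hΦS 0 m (Nat.zero_le m) (by rw [hΦ0]; exact hx0B)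
  have hSpre : ∀ m, IsPreconnected (S m) := by
    intro m
    induction m with
    | zero =>
      have : S 0 = Φ 0 := by
        apply Set.Subset.antisymm
        · intro x hx
          obtain ⟨j, hj, hxj⟩ := Set.mem_iUnion₂.mp hx
          rwa [Nat.le_zero.mp hj] at hxj
        · exact hΦS 0 0 le_rfl
      rw [this]; exact hΦpre 0
    | succ m ih =>
      rw [hSsucc m]
      exact IsPreconnected.union (g^[p*n₁*m] c) (hΦS m m le_rfl (hover m).1) (hover m).2
        ih (hΦpre (m+1))
  set A : Set II := ⋃ m, S m with hAdef
  have hApre : IsPreconnected A := by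
    have : A = ⋃₀ (Set.range S) := by rw [Set.sUnion_range]
    rw [this]
    exact isPreconnected_sUnion x0 _ (by rintro _ ⟨m, rfl⟩; exact hx0S m)
      (by rintro _ ⟨m, rfl⟩; exact hSpre m)
  have hΦA : ∀ j, Φ j ⊆ A := fun j => le_trans (hΦS j j le_rfl) (Set.subset_iUnion S j)
  -- A is dense
  have hAdense : Dense A := by
    rw [dense_iff_inter_open]
    intro V hVo hVne
    by_contra hemp
    rw [Set.not_nonempty_iff_eq_empty] at hemp
    have hpn : 1 ≤ p * n₁ := Nat.one_le_iff_ne_zero.mpr (by positivity)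
    obtain ⟨K, hKge, ⟨w, hwim, hwV⟩⟩ := hTT (p*n₁) hpn B V hBo ⟨x0, hx0B⟩ hVo hVne
    have hwA : w ∈ A := hΦA K hwim
    exact absurd (Set.mem_inter hwV hwA) (by rw [hemp]; exact Set.notMem_empty w)
  -- z ∈ A
  have hzA : z ∈ A := by
    obtain ⟨a1, ha1A⟩ : ∃ a1, a1 ∈ (Subtype.val ⁻¹' (Set.Iio (z:ℝ)) : Set II) ∩ A := by
      apply (dense_iff_inter_open.mp hAdense)
      · exact open_preimage isOpen_Iio
      · exact ⟨⟨0, by norm_num⟩, by simpa using hz0⟩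
    obtain ⟨a2, ha2A⟩ : ∃ a2, a2 ∈ (Subtype.val ⁻¹' (Set.Ioi (z:ℝ)) : Set II) ∩ A := by
      apply (dense_iff_inter_open.mp hAdense)
      · exact open_preimage isOpen_Ioi
      · exact ⟨⟨1, by norm_num⟩, by simpa using hz1⟩
    have hvalA : IsPreconnected (Subtype.val '' A) := hApre.image _ continuous_subtype_val.continuousOn
    have hOC := hvalA.ordConnected
    have : (z:ℝ) ∈ Subtype.val '' A := by
      refine hOC.out ⟨a1, ha1A.2, rfl⟩ ⟨a2, ha2A.2, rfl⟩ ⟨le_of_lt ha1A.1, le_of_lt ha2A.1⟩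
    obtain ⟨w, hwA, hwv⟩ := this
    rwa [show w = z from Subtype.ext hwv] at hwA
  obtain ⟨m0, hm0⟩ := Set.mem_iUnion.mp hzA
  obtain ⟨j, _, hzj⟩ := Set.mem_iUnion₂.mp hm0
  refine ⟨n₁ * j, ?_⟩
  intro m hm
  obtain ⟨u, huB, hu⟩ := hzj
  refine ⟨u, hBJ huB, ?_⟩
  have hdecomp : p * m = p * (m - n₁*j) + p*n₁*j := by
    have h2 : (m - n₁*j) + n₁*j = m := Nat.sub_add_cancel hm
    calc p*m = p*((m - n₁*j) + n₁*j) := by rw [h2]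
    _ = p*(m-n₁*j) + p*n₁*j := by ring
  rw [hdecomp, Function.iterate_add_apply, hu]
  exact fix_iter_mul hzfix _


/-- existence of a second interior periodic point below z -/
lemma exists_second_periodic (hg : Continuous g) (hTT : TTg g) (z : II)
    (hzfix : g z = z) (hz0 : 0 < (z:ℝ)) (hz1 : (z:ℝ) < 1) :
    ∃ (q : ℕ) (y : II), 1 ≤ q ∧ g^[q] y = y ∧ 0 < (y:ℝ) ∧ (y:ℝ) < (z:ℝ) := by
  set c₁ : ℝ := (z:ℝ)/4 with hc₁
  set d₁ : ℝ := (z:ℝ)/2 with hd₁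
  have hc₁0 : 0 < c₁ := by positivity
  have hcd : c₁ < d₁ := by rw [hc₁, hd₁]; linarith
  have hdz : d₁ < (z:ℝ) := by rw [hd₁]; linarith
  set J₁ : Set II := Subtype.val ⁻¹' (Set.Ioo c₁ d₁) with hJ₁def
  have hJ₁o : IsOpen J₁ := open_preimage isOpen_Ioo
  have hJ₁ne : J₁.Nonempty := by
    refine ⟨⟨(c₁+d₁)/2, by constructor <;> nlinarith [z.2.2]⟩, ?_⟩
    simp only [J₁, Set.mem_preimage, Set.mem_Ioo]
    constructor <;> nlinarith
  have hJ₁pre : IsPreconnected J₁ :=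
    preconn_preimage _ ((Set.ordConnected_Ioo).inter Set.ordConnected_Icc)
  -- z eventually always in images of J₁
  obtain ⟨M₁, hM₁⟩ := crux hg hTT 1 le_rfl z (by simpa using hzfix) hz0 hz1 J₁ hJ₁o hJ₁ne
  -- hit far below c₁ at a large time
  set V₀ : Set II := Subtype.val ⁻¹' (Set.Ioo (0:ℝ) c₁) with hV₀def
  have hV₀o : IsOpen V₀ := open_preimage isOpen_Ioo
  have hV₀ne : V₀.Nonempty := by
    refine ⟨⟨c₁/2, by constructor <;> nlinarith [z.2.2]⟩, ?_⟩
    simp only [V₀, Set.mem_preimage, Set.mem_Ioo]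
    constructor <;> nlinarith
  obtain ⟨K, hKge, ⟨w₀, hw₀im, hw₀V⟩⟩ := hTT (M₁+1) (Nat.le_add_left 1 M₁) J₁ V₀ hJ₁o hJ₁ne hV₀o hV₀ne
  set e₂ : ℕ := (M₁+1)*K with he₂
  have he₂1 : 1 ≤ e₂ := Nat.one_le_iff_ne_zero.mpr (by positivity)
  have he₂M : M₁ ≤ e₂ := by
    calc M₁ ≤ M₁ + 1 := Nat.le_succ _
    _ = (M₁+1)*1 := (mul_one _).symm
    _ ≤ (M₁+1)*K := Nat.mul_le_mul_left _ hKge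
  set E : Set II := g^[e₂] '' J₁ with hEdef
  have hzE : z ∈ E := by
    have := hM₁ e₂ he₂M
    simpa [E, one_mul] using this
  have hw₀E : w₀ ∈ E := hw₀im
  have hEpre : IsPreconnected E := hJ₁pre.image _ (hg.iterate _).continuousOn
  have hOCE := (hEpre.image Subtype.val continuous_subtype_val.continuousOn).ordConnected
  -- get u, v in J₁ hitting c₁ and d₁
  have hmemIcc : ∀ t : ℝ, t ∈ Set.Icc c₁ d₁ → ∃ u ∈ J₁, ((g^[e₂] u : II) : ℝ) = t := by
    intro t ht
    have h1 : ((w₀ : II) : ℝ) ∈ Subtype.val '' E := ⟨w₀, hw₀E, rfl⟩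
    have h2 : ((z : II) : ℝ) ∈ Subtype.val '' E := ⟨z, hzE, rfl⟩
    have ht' : t ∈ Set.Icc ((w₀:II):ℝ) ((z:II):ℝ) := by
      constructor
      · exact le_trans (le_of_lt hw₀V.2) ht.1
      · exact le_trans ht.2 (le_of_lt hdz)
    obtain ⟨x, hxE, hxv⟩ := hOCE.out h1 h2 ht'
    obtain ⟨u, huJ, hux⟩ := hxE
    exact ⟨u, huJ, by rw [hux]; exact hxv⟩
  obtain ⟨u, huJ, huv⟩ := hmemIcc c₁ ⟨le_rfl, le_of_lt hcd⟩
  obtain ⟨v, hvJ, hvv⟩ := hmemIcc d₁ ⟨le_of_lt hcd, le_rfl⟩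
  -- IVT for φ = g^[e₂] - id on J₁
  set φ : II → ℝ := fun x => ((g^[e₂] x : II) : ℝ) - (x:ℝ) with hφdef
  have hφc : Continuous φ := (continuous_subtype_val.comp (hg.iterate _)).sub continuous_subtype_val
  have hφu : φ u < 0 := by
    have : c₁ < (u:ℝ) := huJ.1
    simp only [φ]; rw [huv]; linarith
  have hφv : 0 < φ v := by
    have : (v:ℝ) < d₁ := hvJ.2
    simp only [φ]; rw [hvv]; linarith
  have hOCφ := (hJ₁pre.image φ hφc.continuousOn).ordConnected
  have h0 : (0:ℝ) ∈ φ '' J₁ :=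
    hOCφ.out ⟨u, huJ, rfl⟩ ⟨v, hvJ, rfl⟩ ⟨le_of_lt hφu, le_of_lt hφv⟩
  obtain ⟨y, hyJ, hy0⟩ := h0
  refine ⟨e₂, y, he₂1, ?_, ?_, ?_⟩
  · exact Subtype.ext (by simp only [φ] at hy0; linarith)
  · exact lt_trans hc₁0 hyJ.1
  · exact lt_trans hyJ.2 hdz


/-- CORE: uniform separation constant and common time for any finite family -/
lemma core (hg : Continuous g) (hTT : TTg g) :
    ∃ δ > (0:ℝ), ∀ (r : ℕ) (v : ℕ → ℕ), (∀ i < r, 1 ≤ v i) →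
      ∀ U : ℕ → Set II, (∀ i < r, IsOpen (U i) ∧ (U i).Nonempty) →
      ∃ t ≥ 1, ∀ i < r, ∃ x ∈ U i, ∃ y ∈ U i,
        δ < dist (g^[t * v i] x) (g^[t * v i] y) := by
  obtain ⟨z, hzfix, hz0, hz1⟩ := exists_interior_fixed hg hTT
  obtain ⟨q, y, hq1, hyfix, hy0, hyz⟩ := exists_second_periodic hg hTT z hzfix hz0 hz1
  have hy1 : (y:ℝ) < 1 := lt_trans hyz hz1
  -- distance from z to the orbit of y
  have hqpos : 0 < q := hq1
  have hzy : ∀ s < q, z ≠ g^[s] y := by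
    intro s hs h
    have h1 : g^[q - s] (g^[s] y) = y := by
      rw [← Function.iterate_add_apply, Nat.sub_add_cancel (le_of_lt hs)]
      exact hyfix
    rw [← h, fix_iter hzfix _] at h1
    rw [h1] at hyz
    exact lt_irrefl _ hyz
  set D : ℝ := (Finset.range q).inf' ⟨0, Finset.mem_range.mpr hqpos⟩
    (fun s => dist z (g^[s] y)) with hDdef
  have hD : 0 < D := by
    rw [hDdef]; refine (Finset.lt_inf'_iff _).mpr ?_
    intro s hs
    exact dist_pos.mpr (hzy s (Finset.mem_range.mp hs))
  refine ⟨D/2, by linarith, ?_⟩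
  intro r v hv U hU
  -- choose thresholds
  have Hc : ∀ i, ∃ Mz My : ℕ, i < r →
      ((∀ m ≥ Mz, z ∈ g^[1*m] '' (U i)) ∧ (∀ m ≥ My, y ∈ g^[q*m] '' (U i))) := by
    intro i
    by_cases hi : i < r
    · obtain ⟨hUo, hUne⟩ := hU i hi
      obtain ⟨Mz, hMz⟩ := crux hg hTT 1 le_rfl z (by simpa using hzfix) hz0 hz1 (U i) hUo hUne
      obtain ⟨My, hMy⟩ := crux hg hTT q hq1 y hyfix hy0 hy1 (U i) hUo hUne
      exact ⟨Mz, My, fun _ => ⟨hMz, hMy⟩⟩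
    · exact ⟨0, 0, fun h => absurd h hi⟩
  choose Mz My hM using Hc
  set t : ℕ := (Finset.range r).sup (fun i => max (Mz i) (q * (My i + 1))) + 1 with htdef
  refine ⟨t, Nat.le_add_left 1 _, ?_⟩
  intro i hi
  set e : ℕ := t * v i with hedef
  have hte : t ≤ e := by
    calc t = t * 1 := (mul_one t).symm
    _ ≤ t * v i := Nat.mul_le_mul_left t (hv i hi)
  have hsup : max (Mz i) (q * (My i + 1)) < t := by
    rw [htdef]
    exact Nat.lt_succ_of_le (Finset.le_sup (f := fun i => max (Mz i) (q * (My i + 1)))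
      (Finset.mem_range.mpr hi))
  have heMz : Mz i ≤ e := le_trans (le_trans (le_max_left _ _) (le_of_lt hsup)) hte
  have heMy : q * (My i + 1) ≤ e := le_trans (le_trans (le_max_right _ _) (le_of_lt hsup)) hte
  obtain ⟨u₁, hu₁U, hu₁⟩ := (hM i hi).1 e heMz
  rw [one_mul] at hu₁
  -- second point via decomposition e = s + q*m
  set m : ℕ := e / q with hmdef
  set s : ℕ := e % q with hsdef
  have hsq : s < q := Nat.mod_lt e hqpos
  have hMym : My i ≤ m := by
    have h1 : My i + 1 ≤ m := (Nat.le_div_iff_mul_le hqpos).mpr (by rw [mul_comm]; exact heMy)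
    omega
  obtain ⟨u₂, hu₂U, hu₂⟩ := (hM i hi).2 m hMym
  have hdecomp : e = s + q * m := by
    rw [hsdef, hmdef, add_comm]
    exact (Nat.div_add_mod e q).symm
  have himg : g^[e] u₂ = g^[s] y := by
    rw [hdecomp, Function.iterate_add_apply, hu₂]
  refine ⟨u₁, hu₁U, u₂, hu₂U, ?_⟩
  rw [hu₁, himg]
  calc D/2 < D := by linarith
  _ ≤ dist z (g^[s] y) := Finset.inf'_le _ (Finset.mem_range.mpr hsq)

end Auto

section Glue

lemma nacomp_continuous {X : Type*} [TopologicalSpace X] (f : ℕ → X → X)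
    (hf : ∀ n, Continuous (f n)) : ∀ n, Continuous (nacomp f n) := by
  intro n
  induction n with
  | zero => exact continuous_id
  | succ m ih => exact (hf (m+1)).comp ih

lemma nacomp_seg {X : Type*} (f : ℕ → X → X) {k : ℕ} (hper : kPeriodic f k) :
    ∀ m, 1 ≤ m → ∀ j, j ≤ k → nacomp f (k*m + j) = nacomp f j ∘ nacomp f (k*m) := by
  intro m hm j
  induction j with
  | zero => intro _; rfl
  | succ j ih =>
    intro hj
    have hIH := ih (le_trans (Nat.le_succ j) hj)
    have hstep : nacomp f (k*m + (j+1)) = f (k*m + j + 1) ∘ nacomp f (k*m + j) := rfl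
    have hfeq : f (k*m + j + 1) = f (j+1) := by
      rw [show k*m + j + 1 = (j+1) + k*m from by ring]
      exact hper.2 m hm (j+1) (Nat.succ_le_succ (Nat.zero_le j)) hj
    rw [hstep, hfeq, hIH]
    rfl

lemma nacomp_periodic {X : Type*} (f : ℕ → X → X) {k : ℕ} (hper : kPeriodic f k) :
    ∀ m, nacomp f (k*m) = (nacomp f k)^[m] := by
  intro m
  induction m with
  | zero => rfl
  | succ m ih =>
    cases m with
    | zero => simp [Nat.mul_one]
    | succ m' =>
      have h1 : k*(m'+1+1) = k*(m'+1) + k := by ring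
      rw [h1, nacomp_seg f hper (m'+1) (Nat.succ_le_succ (Nat.zero_le m')) k le_rfl, ih,
        Function.iterate_succ' (nacomp f k) (m'+1), Function.iterate_succ' (nacomp f k) m']

lemma TT_of_multiTrans (f : ℕ → II → II) (k : ℕ) (hper : kPeriodic f k)
    (ht : multiTrans f) : TTg (nacomp f k) := by
  intro n hn U V hUo hUne hVo hVne
  have hk := hper.1
  have hm : 1 ≤ n*k := Nat.mul_le_mul hn hk
  obtain ⟨K, hK, hall⟩ := ht (n*k) hm (fun _ => U) (fun _ => V)
    (fun i _ => ⟨hUo, hUne, hVo, hVne⟩)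
  have hlast := hall (n*k - 1) (Nat.sub_lt hm one_pos)
  have hidx : (n*k - 1 + 1) = n*k := Nat.succ_pred_eq_of_pos hm
  rw [hidx] at hlast
  have h2 : nacomp f (n*k*K) = (nacomp f k)^[n*K] := by
    rw [show n*k*K = k*(n*K) from by ring]
    exact nacomp_periodic f hper (n*K)
  rw [h2] at hlast
  exact ⟨K, hK, hlast⟩

end Glue

/-- a periodic multi-transitive non-autonomous system on `[0,1]`
is strongly multi-sensitive. -/
theorem stmt_6 (f : ℕ → ↥(Set.Icc (0:ℝ) 1) → ↥(Set.Icc (0:ℝ) 1))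
    (hf : ∀ n, Continuous (f n)) (k : ℕ) (hper : kPeriodic f k)
    (ht : multiTrans f) : strongMultiSens f := by
  intro r _hr v hv
  have hgc : Continuous (nacomp f k) := nacomp_continuous f hf k
  have hTT : TTg (nacomp f k) := TT_of_multiTrans f k hper ht
  obtain ⟨δ, hδ, hcore⟩ := core hgc hTT
  refine ⟨δ, hδ, ?_⟩
  intro U hU
  obtain ⟨t, ht1, hsep⟩ := hcore r v hv U hU
  refine ⟨k*t, Nat.mul_le_mul hper.1 ht1, ?_⟩
  intro i hi
  obtain ⟨x, hx, y, hy, hd⟩ := hsep i hi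
  refine ⟨x, hx, y, hy, ?_⟩
  have heq : nacomp f (k*t * v i) = (nacomp f k)^[t * v i] := by
    rw [show k*t*(v i) = k*(t* v i) from by ring]
    exact nacomp_periodic f hper (t * v i)
  rw [heq]
  exact hd
end

section
/- Let (X, f_{1,∞}) be a non-autonomous system with each f_n surjective, f_n → f uniformly, {f_n^k} converging collectively to {f^k}, and f_{1,∞} feebly open. Then (X, f_{1,∞}) is N-sensitive if and only if (X, f) is N-sensitive. -/
open Metric Set MeasureTheory

/-!
Collective convergence makes every late block `f_{s+1}^k` (`s ≥ q`) uniformly `δ/4`-close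
to `f^k`. Splitting `f_1^{(q+m)(i+1)} = f_{q(i+1)+1}^{m(i+1)} ∘ f_1^{q(i+1)}`, a `δ`-separation
at time `m(i+1)` for one system becomes a `δ/2`-separation for the other once the open sets
are transported by `f_1^{q(i+1)}`: forwards, by feeble openness, or backwards, by continuity
and surjectivity. For the transfer from `f_{1,∞}` to `f` the sensitivity time must exceed `q`;
this is forced by first shrinking one open set so that it is not `δ`-separated before time `q`.
-/

open Filter Topology

section Nacomp

variable {X : Type*} (f : ℕ → X → X)

lemma nacomp_add_apply (s k : ℕ) (x : X) :
    nacomp f (s + k) x = compFrom f (s + 1) k (nacomp f s x) := by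
  induction k with
  | zero => rfl
  | succ k ih =>
    rw [← add_assoc]
    change f (s + k + 1) (nacomp f (s + k) x) = f (s + 1 + k) (compFrom f (s + 1) k _)
    rw [ih, add_right_comm]

lemma continuous_nacomp [TopologicalSpace X] (hf : ∀ n, Continuous (f n)) (m : ℕ) :
    Continuous (nacomp f m) := by
  induction m with
  | zero => exact continuous_id
  | succ m ih => exact (hf (m + 1)).comp ih

lemma surjective_nacomp (hsurj : ∀ n ≥ 1, Function.Surjective (f n)) (m : ℕ) :
    Function.Surjective (nacomp f m) := by
  induction m with
  | zero => exact Function.surjective_id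
  | succ m ih => exact (hsurj (m + 1) m.succ_pos).comp ih

lemma interior_image_nacomp_nonempty [TopologicalSpace X]
    (hfeeble : ∀ n ≥ 1, ∀ U : Set X, IsOpen U → U.Nonempty → (interior (f n '' U)).Nonempty)
    (m : ℕ) {U : Set X} (hUo : IsOpen U) (hUne : U.Nonempty) :
    (interior (nacomp f m '' U)).Nonempty := by
  induction m with
  | zero => simpa [nacomp, hUo.interior_eq] using hUne
  | succ m ih =>
    refine (hfeeble (m + 1) m.succ_pos _ isOpen_interior ih).mono (interior_mono ?_)
    calc f (m + 1) '' interior (nacomp f m '' U)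
        ⊆ f (m + 1) '' (nacomp f m '' U) := image_mono interior_subset
      _ = nacomp f (m + 1) '' U := by rw [image_image]; rfl

lemma dist_nacomp_add_mul_iterate_lt {F : X → X} [PseudoMetricSpace X] {ε : ℝ} {N₀ : ℕ}
    (hN₀ : ∀ N ≥ N₀, ∀ k, ∀ x, dist (compFrom f N k x) (F^[k] x) < ε)
    {q : ℕ} (hq : N₀ ≤ q) (m i : ℕ) (x : X) :
    dist (nacomp f ((q + m) * (i + 1)) x) (F^[m * (i + 1)] (nacomp f (q * (i + 1)) x)) < ε := by
  rw [add_mul, nacomp_add_apply]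
  exact hN₀ _ (le_add_right (hq.trans (Nat.le_mul_of_pos_right q i.succ_pos))) _ _

end Nacomp

lemma sub_two_mul_lt_dist {X : Type*} [PseudoMetricSpace X] {a b a' b' : X} {δ ε : ℝ}
    (h : δ < dist a b) (ha : dist a a' < ε) (hb : dist b b' < ε) :
    δ - 2 * ε < dist a' b' := by
  linarith [dist_triangle4 a a' b' b, dist_comm b b']

lemma exists_isOpen_subset_forall_dist_lt {X Y : Type*} [TopologicalSpace X]
    [PseudoMetricSpace Y] {g : ℕ → X → Y} (hg : ∀ j, Continuous (g j)) {U : Set X}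
    (hUo : IsOpen U) (hUne : U.Nonempty) (N : ℕ) {ε : ℝ} (hε : 0 < ε) :
    ∃ V ⊆ U, IsOpen V ∧ V.Nonempty ∧
      ∀ j ≤ N, ∀ x ∈ V, ∀ y ∈ V, dist (g j x) (g j y) < ε := by
  obtain ⟨w, hw⟩ := hUne
  have hnear : ∀ᶠ x in 𝓝 w, x ∈ U ∧ ∀ j ∈ Iic N, dist (g j x) (g j w) < ε / 2 :=
    (hUo.eventually_mem hw).and <| (eventually_all_finite (finite_Iic N)).2 fun j _ =>
      (hg j).continuousAt.eventually (ball_mem_nhds _ (half_pos hε))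
  obtain ⟨V, hV, hVo, hwV⟩ := _root_.eventually_nhds_iff.1 hnear
  refine ⟨V, fun x hx => (hV x hx).1, hVo, ⟨w, hwV⟩, fun j hj x hx y hy => ?_⟩
  linarith [dist_triangle_right (g j x) (g j y) (g j w), (hV x hx).2 j hj, (hV y hy).2 j hj]

lemma multiSensWrt.exists_forall_time_gt {X : Type*} [MetricSpace X] {f : ℕ → X → X}
    (hf : ∀ n, Continuous (f n)) {r : ℕ} (hr : 0 < r) {v : ℕ → ℕ} (h : multiSensWrt f r v) :
    ∃ δ > 0, ∀ U : ℕ → Set X, (∀ i < r, IsOpen (U i) ∧ (U i).Nonempty) → ∀ q,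
      ∃ n > q, ∀ i < r, ∃ x ∈ U i, ∃ y ∈ U i,
        δ < dist (nacomp f (n * v i) x) (nacomp f (n * v i) y) := by
  obtain ⟨δ, hδ, hsens⟩ := h
  refine ⟨δ, hδ, fun U hU q => ?_⟩
  obtain ⟨V, hVU, hVo, hVne, hVsmall⟩ := exists_isOpen_subset_forall_dist_lt
    (continuous_nacomp f hf) (hU 0 hr).1 (hU 0 hr).2 (q * v 0) hδ
  have hsub : ∀ i, Function.update U 0 V i ⊆ U i := fun i => by
    rcases eq_or_ne i 0 with rfl | hi <;> simp [*]
  obtain ⟨n, -, hn⟩ := hsens (Function.update U 0 V) fun i hi => by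
    rcases eq_or_ne i 0 with rfl | hi0
    · simpa using ⟨hVo, hVne⟩
    · simpa [hi0] using hU i hi
  refine ⟨n, ?_, fun i hi => ?_⟩
  · by_contra! hnq
    obtain ⟨x, hx, y, hy, hxy⟩ := hn 0 hr
    simp only [Function.update_self] at hx hy
    exact (hVsmall _ (Nat.mul_le_mul_right _ hnq) x hx y hy).not_gt hxy
  · obtain ⟨x, hx, y, hy, hxy⟩ := hn i hi
    exact ⟨x, hsub i hx, y, hsub i hy, hxy⟩

theorem stmt_14_general {X : Type*} [MetricSpace X] (f : ℕ → X → X) (F : X → X)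
    (hf : ∀ n, Continuous (f n))
    (hsurj : ∀ n ≥ 1, Function.Surjective (f n))
    (hcoll : ∀ ε > 0, ∃ N₀, ∀ N ≥ N₀, ∀ k, ∀ x, dist (compFrom f N k x) (F^[k] x) < ε)
    (hfeeble : ∀ n ≥ 1, ∀ U : Set X, IsOpen U → U.Nonempty →
      (interior (f n '' U)).Nonempty) :
    nSens f ↔ nSensAuto F := by
  constructor
  · intro hs r hr
    obtain ⟨δ, hδ, hsens⟩ := (hs r hr).exists_forall_time_gt hf hr
    obtain ⟨q, hq⟩ := hcoll (δ / 4) (by positivity)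
    have hclose := dist_nacomp_add_mul_iterate_lt f hq le_rfl
    refine ⟨δ / 2, by positivity, fun U hU => ?_⟩
    obtain ⟨n, hnq, hn⟩ := hsens (fun i => nacomp f (q * (i + 1)) ⁻¹' U i) (fun i hi =>
      ⟨(hU i hi).1.preimage (continuous_nacomp f hf _),
        (hU i hi).2.preimage (surjective_nacomp f hsurj _)⟩) q
    obtain ⟨m, rfl⟩ := Nat.exists_eq_add_of_lt hnq
    refine ⟨m + 1, m.succ_pos, fun i hi => ?_⟩
    obtain ⟨x, hx, y, hy, hxy⟩ := hn i hi
    refine ⟨_, hx, _, hy, ?_⟩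
    rw [add_assoc] at hxy
    linarith [sub_two_mul_lt_dist hxy (hclose _ i x) (hclose _ i y)]
  · intro hS r hr
    obtain ⟨δ, hδ, hsens⟩ := hS r hr
    obtain ⟨q, hq⟩ := hcoll (δ / 4) (by positivity)
    have hclose := dist_nacomp_add_mul_iterate_lt f hq le_rfl
    refine ⟨δ / 2, by positivity, fun U hU => ?_⟩
    obtain ⟨m, hm, hsep⟩ := hsens (fun i => interior (nacomp f (q * (i + 1)) '' U i))
      fun i hi =>
        ⟨isOpen_interior, interior_image_nacomp_nonempty f hfeeble _ (hU i hi).1 (hU i hi).2⟩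
    refine ⟨q + m, by omega, fun i hi => ?_⟩
    obtain ⟨_, hx', _, hy', hxy⟩ := hsep i hi
    obtain ⟨x, hx, rfl⟩ := interior_subset hx'
    obtain ⟨y, hy, rfl⟩ := interior_subset hy'
    refine ⟨x, hx, y, hy, ?_⟩
    linarith [sub_two_mul_lt_dist hxy ((dist_comm _ _).trans_lt (hclose m i x))
      ((dist_comm _ _).trans_lt (hclose m i y))]

/-- under surjectivity, uniform convergence, collective convergence
and feeble openness, `f_{1,∞}` is 𝒩-sensitive iff the limit `F` is. -/
theorem stmt_14 {X : Type*} [MetricSpace X] [CompactSpace X] (f : ℕ → X → X) (F : X → X)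
    (hf : ∀ n, Continuous (f n)) (hFc : Continuous F)
    (hsurj : ∀ n ≥ 1, Function.Surjective (f n))
    (hunif : ∀ ε > 0, ∃ N, ∀ n ≥ N, ∀ x, dist (f n x) (F x) < ε)
    (hcoll : ∀ ε > 0, ∃ N₀, ∀ N ≥ N₀, ∀ k, ∀ x, dist (compFrom f N k x) (F^[k] x) < ε)
    (hfeeble : ∀ n ≥ 1, ∀ U : Set X, IsOpen U → U.Nonempty →
      (interior (f n '' U)).Nonempty) :
    nSens f ↔ nSensAuto F :=
  stmt_14_general f F hf hsurj hcoll hfeeble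
end

section
/- Let ([0,1], f_{1,∞}) be a uniformly convergent non-autonomous system with uniform limit f, such that {f_n^k} converges collectively to {f^k} and f_{1,∞} is feebly open and surjective. Then sensitivity, multi-sensitivity, N-sensitivity, and strong multi-sensitivity of ([0,1], f_{1,∞}) are all equivalent. -/
open Metric Set MeasureTheory

namespace Stmt15Aux

set_option linter.unusedSectionVars false
set_option linter.unusedVariables false
set_option linter.deprecated false

variable {X : Type*}

lemma nacomp_succ (f : ℕ → X → X) (n : ℕ) (x : X) :
    nacomp f (n+1) x = f (n+1) (nacomp f n x) := rfl

lemma compFrom_succ (f : ℕ → X → X) (i k : ℕ) (x : X) :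
    compFrom f i (k+1) x = f (i+k) (compFrom f i k x) := rfl

lemma nacomp_decomp (f : ℕ → X → X) (N k : ℕ) (x : X) :
    nacomp f (N + k) x = compFrom f (N+1) k (nacomp f N x) := by
  induction k with
  | zero => rfl
  | succ k ih =>
    have h1 : N + (k+1) = (N + k) + 1 := rfl
    rw [h1, nacomp_succ, ih, compFrom_succ]
    have : N + 1 + k = N + k + 1 := by omega
    rw [this]

lemma nacomp_cont [TopologicalSpace X] {f : ℕ → X → X} (hf : ∀ n, Continuous (f n)) (n : ℕ) :
    Continuous (nacomp f n) := by
  induction n with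
  | zero => exact continuous_id
  | succ n ih => exact (hf (n+1)).comp ih

lemma nacomp_const (F : X → X) (n : ℕ) : nacomp (fun _ => F) n = F^[n] := by
  induction n with
  | zero => rfl
  | succ n ih =>
    funext x
    rw [Function.iterate_succ_apply', nacomp_succ, ih]

lemma nacomp_surj {f : ℕ → X → X} (hs : ∀ n ≥ 1, Function.Surjective (f n)) (n : ℕ) :
    Function.Surjective (nacomp f n) := by
  induction n with
  | zero => exact Function.surjective_id
  | succ n ih => exact (hs (n+1) (by omega)).comp ih

lemma feeble_nacomp [TopologicalSpace X] {f : ℕ → X → X}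
    (hfeeble : ∀ n ≥ 1, ∀ U : Set X, IsOpen U → U.Nonempty → (interior (f n '' U)).Nonempty)
    (N : ℕ) (U : Set X) (hU : IsOpen U) (hne : U.Nonempty) :
    (interior (nacomp f N '' U)).Nonempty := by
  induction N with
  | zero =>
    have : nacomp f 0 '' U = U := Set.image_id U
    rw [this, hU.interior_eq]; exact hne
  | succ N ih =>
    obtain ⟨V, hV⟩ := ih
    have hsub : f (N+1) '' (interior (nacomp f N '' U)) ⊆ nacomp f (N+1) '' U := by
      intro z hz
      obtain ⟨w, hw, rfl⟩ := hz
      obtain ⟨u, hu, rfl⟩ := interior_subset hw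
      exact ⟨u, hu, rfl⟩
    obtain ⟨z, hz⟩ := hfeeble (N+1) (by omega) _ isOpen_interior ⟨V, hV⟩
    exact ⟨z, interior_mono hsub hz⟩

lemma unif_family [MetricSpace X] [CompactSpace X] (g : ℕ → X → X)
    (hg : ∀ t, Continuous (g t)) (m : ℕ) {ε : ℝ} (hε : 0 < ε) :
    ∃ η > 0, ∀ t ≤ m, ∀ x y : X, dist x y < η → dist (g t x) (g t y) < ε := by
  have h : ∀ t : ℕ, ∃ η > 0, ∀ x y : X, dist x y < η → dist (g t x) (g t y) < ε := by
    intro t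
    obtain ⟨η, hη, h⟩ := Metric.uniformContinuous_iff.mp
      (CompactSpace.uniformContinuous_of_continuous (hg t)) ε hε
    exact ⟨η, hη, fun x y hxy => h hxy⟩
  choose η hη h using h
  have hne : (Finset.range (m+1)).Nonempty := ⟨0, by simp⟩
  refine ⟨(Finset.range (m+1)).inf' hne η, ?_, ?_⟩
  · exact (Finset.lt_inf'_iff hne).mpr (fun i _ => hη i)
  · intro t ht x y hxy
    refine h t x y (lt_of_lt_of_le hxy ?_)
    exact Finset.inf'_le η (by simp; omega)


section Transfer
variable [MetricSpace X] [CompactSpace X]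

lemma sens_to_auto {f : ℕ → X → X} {F : X → X}
    (hf : ∀ n, Continuous (f n))
    (hsurj : ∀ n ≥ 1, Function.Surjective (f n))
    (hcoll : ∀ ε > 0, ∃ N₀, ∀ N ≥ N₀, ∀ k, ∀ x, dist (compFrom f N k x) (F^[k] x) < ε)
    (hsens : sens f) :
    ∃ δ > 0, ∀ U : Set X, IsOpen U → U.Nonempty →
      ∃ n ≥ 1, ∃ x ∈ U, ∃ y ∈ U, δ < dist (F^[n] x) (F^[n] y) := by
  obtain ⟨δ, hδ, hs⟩ := hsens
  obtain ⟨N₀, hN₀⟩ := hcoll (δ/4) (by positivity)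
  obtain ⟨η, hη, hηs⟩ := unif_family (fun t => nacomp f t) (fun t => nacomp_cont hf t) N₀ hδ
  refine ⟨δ/2, by positivity, ?_⟩
  intro U hUo hUne
  have hpre : ((nacomp f N₀) ⁻¹' U).Nonempty := by
    obtain ⟨u, hu⟩ := hUne
    obtain ⟨x, hx⟩ := nacomp_surj hsurj N₀ u
    exact ⟨x, by simp only [Set.mem_preimage, hx]; exact hu⟩
  obtain ⟨p, hp⟩ := hpre
  set U' := Metric.ball p (η/2) ∩ (nacomp f N₀) ⁻¹' U with hU'
  have hU'o : IsOpen U' := (Metric.isOpen_ball).inter (hUo.preimage (nacomp_cont hf N₀))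
  have hU'ne : U'.Nonempty := ⟨p, Metric.mem_ball_self (by positivity), hp⟩
  obtain ⟨n, hn1, x, hx, y, hy, hd⟩ := hs U' hU'o hU'ne
  have hxy : dist x y < η := by
    have h1 : dist x p < η/2 := Metric.mem_ball.mp hx.1
    have h2 : dist y p < η/2 := Metric.mem_ball.mp hy.1
    calc dist x y ≤ dist x p + dist p y := dist_triangle x p y
    _ = dist x p + dist y p := by rw [dist_comm p y]
    _ < η := by linarith
  have hnN : N₀ + 1 ≤ n := by
    by_contra h
    push_neg at h
    have := hηs n (by omega) x y hxy
    linarith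
  set k := n - N₀ with hk
  have hk1 : 1 ≤ k := by omega
  have hdecomp : ∀ z : X, nacomp f n z = compFrom f (N₀+1) k (nacomp f N₀ z) := by
    intro z
    have : n = N₀ + k := by omega
    rw [this, nacomp_decomp]
  have ha := hN₀ (N₀+1) (by omega) k (nacomp f N₀ x)
  have hb := hN₀ (N₀+1) (by omega) k (nacomp f N₀ y)
  refine ⟨k, hk1, nacomp f N₀ x, hx.2, nacomp f N₀ y, hy.2, ?_⟩
  rw [hdecomp x, hdecomp y] at hd
  have htri : dist (compFrom f (N₀+1) k (nacomp f N₀ x)) (compFrom f (N₀+1) k (nacomp f N₀ y))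
      ≤ dist (compFrom f (N₀+1) k (nacomp f N₀ x)) (F^[k] (nacomp f N₀ x))
        + dist (F^[k] (nacomp f N₀ x)) (F^[k] (nacomp f N₀ y))
        + dist (F^[k] (nacomp f N₀ y)) (compFrom f (N₀+1) k (nacomp f N₀ y)) :=
    dist_triangle4 _ _ _ _
  rw [dist_comm (F^[k] (nacomp f N₀ y))] at htri
  linarith

lemma cof_transfer {f : ℕ → X → X} {F : X → X}
    (hf : ∀ n, Continuous (f n))
    (hcoll : ∀ ε > 0, ∃ N₀, ∀ N ≥ N₀, ∀ k, ∀ x, dist (compFrom f N k x) (F^[k] x) < ε)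
    (hfeeble : ∀ n ≥ 1, ∀ U : Set X, IsOpen U → U.Nonempty → (interior (f n '' U)).Nonempty)
    (hcof : ∃ δ > 0, ∀ U : Set X, IsOpen U → U.Nonempty →
      {n : ℕ | 1 ≤ n ∧ ¬ ∃ x ∈ U, ∃ y ∈ U, δ < dist (F^[n] x) (F^[n] y)}.Finite) :
    cofSens f := by
  obtain ⟨δ, hδ, hcf⟩ := hcof
  obtain ⟨N₀, hN₀⟩ := hcoll (δ/4) (by positivity)
  refine ⟨δ/2, by positivity, ?_⟩
  intro U hUo hUne
  set V := interior (nacomp f N₀ '' U) with hV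
  have hVne : V.Nonempty := feeble_nacomp hfeeble N₀ U hUo hUne
  have hfin := hcf V isOpen_interior hVne
  apply Set.Finite.subset ((Set.finite_Iic N₀).union (hfin.image (fun k => N₀ + k)))
  rintro n ⟨hn1, hnsep⟩
  rcases le_or_gt n N₀ with h | h
  · exact Or.inl h
  · right
    set k := n - N₀ with hk
    have hk1 : 1 ≤ k := by omega
    refine ⟨k, ⟨hk1, ?_⟩, by simpa using (by omega : N₀ + k = n)⟩
    rintro ⟨a, haV, b, hbV, hab⟩
    apply hnsep
    obtain ⟨x, hxU, hxa⟩ := interior_subset haV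
    obtain ⟨y, hyU, hyb⟩ := interior_subset hbV
    refine ⟨x, hxU, y, hyU, ?_⟩
    have hdx : nacomp f n x = compFrom f (N₀+1) k a := by
      rw [show n = N₀ + k by omega, nacomp_decomp, hxa]
    have hdy : nacomp f n y = compFrom f (N₀+1) k b := by
      rw [show n = N₀ + k by omega, nacomp_decomp, hyb]
    rw [hdx, hdy]
    have ha := hN₀ (N₀+1) (by omega) k a
    have hb := hN₀ (N₀+1) (by omega) k b
    have htri : dist (F^[k] a) (F^[k] b)
        ≤ dist (F^[k] a) (compFrom f (N₀+1) k a)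
          + dist (compFrom f (N₀+1) k a) (compFrom f (N₀+1) k b)
          + dist (compFrom f (N₀+1) k b) (F^[k] b) := dist_triangle4 _ _ _ _
    have ha' : dist (F^[k] a) (compFrom f (N₀+1) k a) < δ/4 := by rw [dist_comm]; exact ha
    linarith


end Transfer

lemma auto_cof {F : ↥(Set.Icc (0:ℝ) 1) → ↥(Set.Icc (0:ℝ) 1)} (hFc : Continuous F)
    (hsens : ∃ δ > 0, ∀ U : Set ↥(Set.Icc (0:ℝ) 1), IsOpen U → U.Nonempty →
      ∃ n ≥ 1, ∃ x ∈ U, ∃ y ∈ U, δ < dist (F^[n] x) (F^[n] y)) :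
    ∃ δ > 0, ∀ U : Set ↥(Set.Icc (0:ℝ) 1), IsOpen U → U.Nonempty →
      {n : ℕ | 1 ≤ n ∧ ¬ ∃ x ∈ U, ∃ y ∈ U, δ < dist (F^[n] x) (F^[n] y)}.Finite := by
  classical
  obtain ⟨δ, hδ, hs⟩ := hsens
  -- δ < 1
  have hδ1 : δ < 1 := by
    obtain ⟨n, -, x, -, y, -, hdxy⟩ := hs univ isOpen_univ ⟨⟨0, by norm_num⟩, mem_univ _⟩
    have h1 := (F^[n] x).2
    have h2 := (F^[n] y).2
    simp only [mem_Icc] at h1 h2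
    have : dist (F^[n] x) (F^[n] y) ≤ 1 := by
      rw [Subtype.dist_eq, Real.dist_eq, abs_le]
      constructor <;> linarith
    linarith
  -- Lemma A : uniform expansion time for intervals of length δ/8
  have lemA : ∃ m : ℕ, 1 ≤ m ∧ ∀ a ∈ Icc (0:ℝ) (1 - δ/8), ∃ t, 1 ≤ t ∧ t ≤ m ∧
      ∃ x y : ↥(Set.Icc (0:ℝ) 1), x.1 ∈ Ioo a (a + δ/8) ∧ y.1 ∈ Ioo a (a + δ/8) ∧
        δ < dist (F^[t] x) (F^[t] y) := by
    have key : ∀ a : ↥(Icc (0:ℝ) (1 - δ/8)), ∃ (n : ℕ) (W : Set ℝ),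
        IsOpen W ∧ a.1 ∈ W ∧ 1 ≤ n ∧
        ∀ a' ∈ W, ∃ x y : ↥(Set.Icc (0:ℝ) 1), x.1 ∈ Ioo a' (a' + δ/8) ∧ y.1 ∈ Ioo a' (a' + δ/8) ∧
          δ < dist (F^[n] x) (F^[n] y) := by
      rintro ⟨a, ha⟩
      simp only [mem_Icc] at ha
      set O : Set ↥(Set.Icc (0:ℝ) 1) := Subtype.val ⁻¹' (Ioo a (a + δ/8)) with hO
      have hOopen : IsOpen O := isOpen_Ioo.preimage continuous_subtype_val
      have hmem : (a + δ/16 : ℝ) ∈ Icc (0:ℝ) 1 := ⟨by linarith, by linarith⟩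
      have hOne : O.Nonempty :=
        ⟨⟨a + δ/16, hmem⟩, by simp only [hO, mem_preimage, mem_Ioo]; constructor <;> linarith⟩
      obtain ⟨n, hn1, x, hx, y, hy, hd⟩ := hs O hOopen hOne
      simp only [hO, mem_preimage, mem_Ioo] at hx hy
      have h1 : max x.1 y.1 < a + δ/8 := max_lt hx.2 hy.2
      have h2 : a < min x.1 y.1 := lt_min hx.1 hy.1
      refine ⟨n, Ioo (max x.1 y.1 - δ/8) (min x.1 y.1), isOpen_Ioo,
        ⟨by linarith, h2⟩, hn1, ?_⟩
      intro a' ha'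
      simp only [mem_Ioo] at ha'
      have hminx := min_le_left x.1 y.1
      have hminy := min_le_right x.1 y.1
      have hmaxx := le_max_left x.1 y.1
      have hmaxy := le_max_right x.1 y.1
      exact ⟨x, y, ⟨by linarith, by linarith⟩, ⟨by linarith, by linarith⟩, hd⟩
    choose n W hWo hWmem hn1 hWall using key
    have hcover : Icc (0:ℝ) (1 - δ/8) ⊆ ⋃ a : ↥(Icc (0:ℝ) (1 - δ/8)), W a :=
      fun a ha => mem_iUnion.mpr ⟨⟨a, ha⟩, hWmem ⟨a, ha⟩⟩
    obtain ⟨s, hsub⟩ := isCompact_Icc.elim_finite_subcover W hWo hcover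
    refine ⟨s.sup n ⊔ 1, le_sup_right, ?_⟩
    intro a ha
    have := hsub ha
    rw [mem_iUnion₂] at this
    obtain ⟨i, hi, hai⟩ := this
    exact ⟨n i, hn1 i, le_sup_of_le_left (Finset.le_sup hi), hWall i a hai⟩
  obtain ⟨m, hm1, hA⟩ := lemA
  -- Lemma D : uniform continuity of iterates up to m
  obtain ⟨c₀, hc₀, hc⟩ := unif_family (fun t => F^[t])
    (fun t => hFc.iterate t) m (show (0:ℝ) < δ/4 by positivity)
  set δ' := min c₀ (δ/4) / 2 with hδ'def
  have hδ'pos : 0 < δ' := by positivity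
  refine ⟨δ', hδ'pos, ?_⟩
  intro U hUo hUne
  obtain ⟨p, hp⟩ := hUne
  obtain ⟨ε, hε, hball⟩ := Metric.isOpen_iff.mp hUo p hp
  set J : Set ↥(Set.Icc (0:ℝ) 1) := Subtype.val ⁻¹' (Ioo (p.1 - ε) (p.1 + ε)) with hJ
  have hJU : J ⊆ U := by
    intro z hz
    apply hball
    rw [Metric.mem_ball, Subtype.dist_eq, Real.dist_eq]
    simp only [hJ, mem_preimage, mem_Ioo] at hz
    rw [abs_sub_lt_iff]
    constructor <;> linarith [hz.1, hz.2]
  have hJo : IsOpen J := isOpen_Ioo.preimage continuous_subtype_val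
  have hJne : J.Nonempty :=
    ⟨p, by simp only [hJ, mem_preimage, mem_Ioo]; constructor <;> linarith⟩
  have hJconn : IsPreconnected J := by
    rw [← Topology.IsInducing.isPreconnected_image Topology.IsInducing.subtypeVal]
    rw [Subtype.image_preimage_coe]
    exact ((convex_Icc (0:ℝ) 1).inter (convex_Ioo _ _)).isPreconnected
  -- separation predicate
  set sep : ℝ → ℕ → Prop := fun e t => ∃ x ∈ J, ∃ y ∈ J, e < dist (F^[t] x) (F^[t] y) with hsep
  -- step lemma
  have step : ∀ t, sep (δ/4) t → ∃ k, 1 ≤ k ∧ k ≤ m ∧ sep δ (t + k) := by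
    intro t ht
    have main : ∀ x y : ↥(Set.Icc (0:ℝ) 1), x ∈ J → y ∈ J → (F^[t] x).1 ≤ (F^[t] y).1 →
        δ/4 < dist (F^[t] x) (F^[t] y) → ∃ k, 1 ≤ k ∧ k ≤ m ∧ sep δ (t + k) := by
      intro x y hxJ hyJ hle hd
      set u := F^[t] x with hu
      set v := F^[t] y with hv
      have hdval : δ/4 < v.1 - u.1 := by
        rw [Subtype.dist_eq, Real.dist_eq, abs_of_nonpos (by linarith)] at hd
        linarith
      set K : Set ↥(Set.Icc (0:ℝ) 1) := F^[t] '' J with hK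
      have hKconn : IsPreconnected K := hJconn.image _ (hFc.iterate t).continuousOn
      have hvalK : IsPreconnected (Subtype.val '' K) :=
        hKconn.image _ continuous_subtype_val.continuousOn
      have hord : OrdConnected (Subtype.val '' K) := hvalK.ordConnected
      have huK : u.1 ∈ Subtype.val '' K := ⟨u, ⟨x, hxJ, rfl⟩, rfl⟩
      have hvK : v.1 ∈ Subtype.val '' K := ⟨v, ⟨y, hyJ, rfl⟩, rfl⟩
      have hIcc : Icc u.1 v.1 ⊆ Subtype.val '' K := hord.out huK hvK
      set a := u.1 with ha
      have haI : a ∈ Icc (0:ℝ) (1 - δ/8) := by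
        have h0 : (0:ℝ) ≤ a := u.2.1
        have h1 : v.1 ≤ 1 := v.2.2
        exact ⟨h0, by linarith⟩
      obtain ⟨k, hk1, hkm, x₀, y₀, hx₀, hy₀, hd₀⟩ := hA a haI
      have hgetK : ∀ z : ↥(Set.Icc (0:ℝ) 1), z.1 ∈ Ioo a (a + δ/8) → z ∈ K := by
        intro z hz
        have : z.1 ∈ Icc u.1 v.1 := ⟨le_of_lt hz.1, by linarith [hz.2]⟩
        obtain ⟨w, hwK, hwz⟩ := hIcc this
        rwa [show w = z from Subtype.ext hwz] at hwK
      obtain ⟨x₁, hx₁J, hx₁⟩ := hgetK x₀ hx₀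
      obtain ⟨y₁, hy₁J, hy₁⟩ := hgetK y₀ hy₀
      refine ⟨k, hk1, hkm, x₁, hx₁J, y₁, hy₁J, ?_⟩
      rw [show t + k = k + t from by omega, Function.iterate_add_apply,
        Function.iterate_add_apply, hx₁, hy₁]
      exact hd₀
    obtain ⟨x, hxJ, y, hyJ, hd⟩ := ht
    rcases le_total (F^[t] x).1 (F^[t] y).1 with h | h
    · exact main x y hxJ hyJ h hd
    · exact main y x hyJ hxJ h (by rwa [dist_comm])
  -- first time
  obtain ⟨n₀, hn₀1, xf, hxf, yf, hyf, hdf⟩ := hs J hJo hJne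
  have hfirst : sep (δ/4) n₀ := ⟨xf, hxf, yf, hyf, by linarith⟩
  -- recurrence claim
  have R : ∀ n, n₀ ≤ n → ∃ s u, s ≤ n ∧ n ≤ u ∧ u ≤ s + m ∧ sep (δ/4) s ∧ sep (δ/4) u := by
    intro n hn
    induction n, hn using Nat.le_induction with
    | base => exact ⟨n₀, n₀, le_refl _, le_refl _, by omega, hfirst, hfirst⟩
    | succ n hn ih =>
      obtain ⟨s, u, hsn, hnu, hum, hseps, hsepu⟩ := ih
      rcases Nat.lt_or_ge n u with h | h
      · exact ⟨s, u, by omega, by omega, hum, hseps, hsepu⟩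
      · have hun : u = n := by omega
        obtain ⟨k, hk1, hkm, hsd⟩ := step u hsepu
        obtain ⟨xx, hxx, yy, hyy, hdd⟩ := hsd
        exact ⟨u, u + k, by omega, by omega, by omega, hsepu,
          ⟨xx, hxx, yy, hyy, by linarith⟩⟩
  -- conclusion
  have main2 : ∀ n, n₀ ≤ n → ∃ x ∈ U, ∃ y ∈ U, δ' < dist (F^[n] x) (F^[n] y) := by
    intro n hn
    obtain ⟨s, u, hsn, hnu, hum, _, hsepu⟩ := R n hn
    by_contra hcon
    push_neg at hcon
    obtain ⟨x, hxJ, y, hyJ, hd⟩ := hsepu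
    have h1 : dist (F^[n] x) (F^[n] y) ≤ δ' := hcon _ (hJU hxJ) _ (hJU hyJ)
    have h2 : dist (F^[n] x) (F^[n] y) < c₀ := by
      have hmin : min c₀ (δ/4) ≤ c₀ := min_le_left _ _
      have hminpos : 0 < min c₀ (δ/4) := lt_min hc₀ (by positivity)
      have : δ' < min c₀ (δ/4) := by rw [hδ'def]; linarith
      linarith
    have h3 := hc (u - n) (by omega) (F^[n] x) (F^[n] y) h2
    rw [← Function.iterate_add_apply, ← Function.iterate_add_apply,
      show u - n + n = u from by omega] at h3
    exact absurd hd (not_lt.mpr (le_of_lt h3))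
  apply Set.Finite.subset (Set.finite_Iio n₀)
  rintro n ⟨hn1, hnsep⟩
  rw [mem_Iio]
  by_contra h
  push_neg at h
  exact hnsep (main2 n h)


section Easy
variable [MetricSpace X]

lemma exists_large_not_mem {B : Set ℕ} (hB : B.Finite) : ∃ n, 1 ≤ n ∧ n ∉ B := by
  obtain ⟨M, hM⟩ := hB.bddAbove
  refine ⟨M + 1, by omega, fun h => ?_⟩
  have := hM h
  omega

lemma cof_to_multi {f : ℕ → X → X} (h : cofSens f) : multiSens f := by
  obtain ⟨δ, hδ, hc⟩ := h
  refine ⟨δ, hδ, ?_⟩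
  intro r U hU
  have hBfin : (⋃ i ∈ Finset.range r,
      {n : ℕ | 1 ≤ n ∧ ¬ ∃ x ∈ U i, ∃ y ∈ U i,
        δ < dist (nacomp f n x) (nacomp f n y)}).Finite :=
    Set.Finite.biUnion (Finset.range r).finite_toSet
      (fun i hi => hc (U i) (hU i (Finset.mem_range.mp hi)).1 (hU i (Finset.mem_range.mp hi)).2)
  obtain ⟨n, hn1, hnB⟩ := exists_large_not_mem hBfin
  refine ⟨n, hn1, fun i hi => ?_⟩
  have : n ∉ {n : ℕ | 1 ≤ n ∧ ¬ ∃ x ∈ U i, ∃ y ∈ U i,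
      δ < dist (nacomp f n x) (nacomp f n y)} := by
    intro hmem
    exact hnB (Set.mem_biUnion (Finset.mem_range.mpr hi) hmem)
  simp only [Set.mem_setOf_eq, not_and, not_not] at this
  exact this hn1

lemma cof_to_strong {f : ℕ → X → X} (h : cofSens f) : strongMultiSens f := by
  obtain ⟨δ, hδ, hc⟩ := h
  intro r hr v hv
  refine ⟨δ, hδ, ?_⟩
  intro U hU
  have key : ∀ i, i < r → {n : ℕ | 1 ≤ n ∧ ¬ ∃ x ∈ U i, ∃ y ∈ U i,
      δ < dist (nacomp f (n * v i) x) (nacomp f (n * v i) y)}.Finite := by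
    intro i hi
    have hfin := hc (U i) (hU i hi).1 (hU i hi).2
    obtain ⟨M, hM⟩ := hfin.bddAbove
    apply Set.Finite.subset (Set.finite_Iic M)
    rintro n ⟨hn1, hnp⟩
    have hv1 : 1 ≤ v i := hv i hi
    have h1 : 1 ≤ n * v i := Nat.one_le_iff_ne_zero.mpr (by positivity)
    have hmem : n * v i ∈ {n : ℕ | 1 ≤ n ∧ ¬ ∃ x ∈ U i, ∃ y ∈ U i,
        δ < dist (nacomp f n x) (nacomp f n y)} := ⟨h1, hnp⟩
    have h2 : n * v i ≤ M := hM hmem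
    have h3 : n ≤ n * v i := Nat.le_mul_of_pos_right n (by omega)
    exact mem_Iic.mpr (by omega)
  have hBfin : (⋃ i ∈ Finset.range r,
      {n : ℕ | 1 ≤ n ∧ ¬ ∃ x ∈ U i, ∃ y ∈ U i,
        δ < dist (nacomp f (n * v i) x) (nacomp f (n * v i) y)}).Finite :=
    Set.Finite.biUnion (Finset.range r).finite_toSet
      (fun i hi => key i (Finset.mem_range.mp hi))
  obtain ⟨n, hn1, hnB⟩ := exists_large_not_mem hBfin
  refine ⟨n, hn1, fun i hi => ?_⟩
  have : n ∉ {n : ℕ | 1 ≤ n ∧ ¬ ∃ x ∈ U i, ∃ y ∈ U i,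
      δ < dist (nacomp f (n * v i) x) (nacomp f (n * v i) y)} := by
    intro hmem
    exact hnB (Set.mem_biUnion (Finset.mem_range.mpr hi) hmem)
  simp only [Set.mem_setOf_eq, not_and, not_not] at this
  exact this hn1

lemma strong_to_nsens {f : ℕ → X → X} (h : strongMultiSens f) : nSens f :=
  fun r hr => h r hr (fun i => i + 1) (fun i _ => Nat.le_add_left 1 i)

lemma multi_to_sens {f : ℕ → X → X} (h : multiSens f) : sens f := by
  obtain ⟨δ, hδ, hm⟩ := h
  refine ⟨δ, hδ, ?_⟩
  intro U hUo hUne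
  obtain ⟨n, hn1, hsep⟩ := hm 1 (fun _ => U) (fun i _ => ⟨hUo, hUne⟩)
  exact ⟨n, hn1, hsep 0 (by omega)⟩

lemma nsens_to_sens {f : ℕ → X → X} (h : nSens f) : sens f := by
  obtain ⟨δ, hδ, hm⟩ := h 1 (le_refl 1)
  refine ⟨δ, hδ, ?_⟩
  intro U hUo hUne
  obtain ⟨n, hn1, hsep⟩ := hm (fun _ => U) (fun i _ => ⟨hUo, hUne⟩)
  obtain ⟨x, hx, y, hy, hd⟩ := hsep 0 (by omega)
  norm_num at hd
  exact ⟨n, hn1, x, hx, y, hy, hd⟩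


end Easy

end Stmt15Aux

/-- on `[0,1]`, under uniform and collective convergence, feeble
openness and surjectivity, the four sensitivity notions for `f_{1,∞}` are equivalent. -/
theorem stmt_15 (f : ℕ → ↥(Set.Icc (0:ℝ) 1) → ↥(Set.Icc (0:ℝ) 1))
    (F : ↥(Set.Icc (0:ℝ) 1) → ↥(Set.Icc (0:ℝ) 1))
    (hf : ∀ n, Continuous (f n)) (hFc : Continuous F)
    (hsurj : ∀ n ≥ 1, Function.Surjective (f n))
    (hunif : ∀ ε > 0, ∃ N, ∀ n ≥ N, ∀ x, dist (f n x) (F x) < ε)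
    (hcoll : ∀ ε > 0, ∃ N₀, ∀ N ≥ N₀, ∀ k, ∀ x, dist (compFrom f N k x) (F^[k] x) < ε)
    (hfeeble : ∀ n ≥ 1, ∀ U : Set ↥(Set.Icc (0:ℝ) 1), IsOpen U → U.Nonempty →
      (interior (f n '' U)).Nonempty) :
    (sens f ↔ multiSens f) ∧ (multiSens f ↔ nSens f) ∧ (nSens f ↔ strongMultiSens f) := by
  classical
  have hcof : sens f → cofSens f := fun hs =>
    Stmt15Aux.cof_transfer hf hcoll hfeeble
      (Stmt15Aux.auto_cof hFc (Stmt15Aux.sens_to_auto hf hsurj hcoll hs))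
  exact ⟨⟨fun hs => Stmt15Aux.cof_to_multi (hcof hs),
      fun hm => Stmt15Aux.multi_to_sens hm⟩,
    ⟨fun hm => Stmt15Aux.strong_to_nsens
        (Stmt15Aux.cof_to_strong (hcof (Stmt15Aux.multi_to_sens hm))),
      fun hn => Stmt15Aux.cof_to_multi (hcof (Stmt15Aux.nsens_to_sens hn))⟩,
    ⟨fun hn => Stmt15Aux.cof_to_strong (hcof (Stmt15Aux.nsens_to_sens hn)),
      fun hsm => Stmt15Aux.strong_to_nsens hsm⟩⟩
end

section
/- If a non-autonomous system (X, f_{1,∞}) is multi-transitive, then for any m ∈ ℕ and any nonempty open sets U_1,…,U_m, V_1,…,V_m ⊆ X, the set {l ∈ ℕ : f_1^{jl}(U_j) ∩ V_j ≠ ∅ for each 1 ≤ j ≤ m} is infinite. -/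
open Metric Set MeasureTheory

/-! Given a bound `N`, put `M = N + 1` and apply multi-transitivity to `m * M` pairs of sets:
the pair `(U_i, V_i)` at position `(i + 1) * M` and `(X, X)` elsewhere. A common transition
time `k` for the padded family makes `M * k > N` a common transition time for the original one. -/

/-- `U i` sits at index `(i + 1) * M - 1`, which multi-transitivity pairs with the time
`(i + 1) * M * k`; every other entry is `univ`. -/
def padFamily {X : Type*} (M : ℕ) (U : ℕ → Set X) (j : ℕ) : Set X :=
  if M ∣ j + 1 then U ((j + 1) / M - 1) else univ

section padFamily

variable {X : Type*} {M : ℕ} {U : ℕ → Set X}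

theorem padFamily_mul_sub_one (hM : 0 < M) (i : ℕ) : padFamily M U ((i + 1) * M - 1) = U i := by
  have hpos : 0 < (i + 1) * M := by positivity
  rw [padFamily, Nat.sub_add_cancel hpos, if_pos (Dvd.intro_left _ rfl),
    Nat.mul_div_cancel _ hM, Nat.add_sub_cancel]

theorem padFamily_mem {m : ℕ} {S : Set (Set X)} (huniv : univ ∈ S)
    (hU : ∀ i < m, U i ∈ S) : ∀ j < m * M, padFamily M U j ∈ S := by
  intro j hj
  unfold padFamily
  split_ifs with hdvd
  · obtain ⟨q, hq⟩ := hdvd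
    have hM : 0 < M := Nat.pos_of_ne_zero (by rintro rfl; omega)
    have hqm : q ≤ m := by
      by_contra! hmq
      nlinarith
    have hm : 0 < m := Nat.pos_of_ne_zero (by rintro rfl; simp at hj)
    rw [hq, Nat.mul_div_cancel_left q hM]
    exact hU _ (by omega)
  · exact huniv

end padFamily

theorem multiTrans.exists_mul {X : Type*} [TopologicalSpace X] {f : ℕ → X → X}
    (ht : multiTrans f) {m M : ℕ} (hm : 1 ≤ m) (hM : 0 < M) (U V : ℕ → Set X)
    (hUV : ∀ i < m, IsOpen (U i) ∧ (U i).Nonempty ∧ IsOpen (V i) ∧ (V i).Nonempty) :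
    ∃ k ≥ 1, ∀ i < m, (nacomp f ((i + 1) * (M * k)) '' U i ∩ V i).Nonempty := by
  have : Nonempty X := (hUV 0 hm).2.1.nonempty
  have hU := padFamily_mem (M := M) (S := {s | IsOpen s ∧ s.Nonempty})
    ⟨isOpen_univ, univ_nonempty⟩ fun i hi => ⟨(hUV i hi).1, (hUV i hi).2.1⟩
  have hV := padFamily_mem (M := M) (S := {s | IsOpen s ∧ s.Nonempty})
    ⟨isOpen_univ, univ_nonempty⟩ fun i hi => ⟨(hUV i hi).2.2.1, (hUV i hi).2.2.2⟩
  obtain ⟨k, hk, hmeet⟩ := ht (m * M) (Nat.mul_pos hm hM) (padFamily M U) (padFamily M V)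
    fun j hj => ⟨(hU j hj).1, (hU j hj).2, (hV j hj).1, (hV j hj).2⟩
  refine ⟨k, hk, fun i hi => ?_⟩
  have hpos : 0 < (i + 1) * M := by positivity
  have hj : (i + 1) * M - 1 < m * M := by
    have : (i + 1) * M ≤ m * M := Nat.mul_le_mul_right M hi
    omega
  have := hmeet _ hj
  rwa [Nat.sub_add_cancel hpos, padFamily_mul_sub_one hM,
    padFamily_mul_sub_one hM, mul_assoc] at this

theorem stmt_17_general {X : Type*} [MetricSpace X]
    (f : ℕ → X → X) (ht : multiTrans f) :
    ∀ m ≥ 1, ∀ U V : ℕ → Set X,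
      (∀ i < m, IsOpen (U i) ∧ (U i).Nonempty ∧ IsOpen (V i) ∧ (V i).Nonempty) →
      {l : ℕ | 1 ≤ l ∧ ∀ i < m,
        (nacomp f ((i + 1) * l) '' U i ∩ V i).Nonempty}.Infinite := by
  intro m hm U V hUV
  refine infinite_of_forall_exists_gt fun N => ?_
  obtain ⟨k, hk, hmeet⟩ := ht.exists_mul hm N.succ_pos U V hUV
  exact ⟨(N + 1) * k, ⟨Nat.mul_pos N.succ_pos hk, hmeet⟩, by nlinarith⟩

/-- if `(X, f_{1,∞})` is multi-transitive, then the set of common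
transition times `{l : f_1^{jl}(U_j) ∩ V_j ≠ ∅, 1 ≤ j ≤ m}` is infinite. -/
theorem stmt_17 {X : Type*} [MetricSpace X] [CompactSpace X]
    (hni : ∀ x : X, ¬ IsOpen ({x} : Set X))
    (f : ℕ → X → X) (hf : ∀ n, Continuous (f n)) (ht : multiTrans f) :
    ∀ m ≥ 1, ∀ U V : ℕ → Set X,
      (∀ i < m, IsOpen (U i) ∧ (U i).Nonempty ∧ IsOpen (V i) ∧ (V i).Nonempty) →
      {l : ℕ | 1 ≤ l ∧ ∀ i < m,
        (nacomp f ((i + 1) * l) '' U i ∩ V i).Nonempty}.Infinite :=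
  stmt_17_general f ht
end
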